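/- arXiv:2201.09446 — 2 statements merged into one kernel-verified Lean document; each statement's English description precedes it below -/
import Mathlib

section
/- Let v_k(t) = e^{-t^{2n+2}/(2n+2)} L_k^{(-1/(2n+2))}(t^{2n+2}/(n+1)). For every i, k ∈ ℤ₊ there exist real numbers δ_j^{k,i}, -i ≤ j ≤ i, such that (t d/dt)^i v_k(t) = Σ_{j=-i}^{i} δ_j^{k,i} v_{k+j}(t) for all t ∈ ℝ (with the convention v_ℓ ≡ 0 for ℓ < 0). Moreover δ_i^{k,i} = (n+1)^i (k+i)!/k!, and there is a constant C > 0, depending only on n, such that |δ_j^{k,i}| ≤ C^i (k+i)!/k! for all j with -i ≤ j ≤ i. -/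
/-- Generalized binomial coefficient `binom(a, j) = a (a-1) ⋯ (a-j+1) / j!`. -/
noncomputable def genBinom (a : ℝ) (j : ℕ) : ℝ :=
  (∏ i ∈ Finset.range j, (a - i)) / (Nat.factorial j : ℝ)

/-- Generalized Laguerre polynomial
`L_k^{(a)}(s) = Σ_{i=0}^{k} (-1)^i binom(k+a, k-i) s^i / i!`. -/
noncomputable def laguerre (a : ℝ) (k : ℕ) (s : ℝ) : ℝ :=
  ∑ i ∈ Finset.range (k + 1),
    (-1 : ℝ) ^ i * genBinom ((k : ℝ) + a) (k - i) * s ^ i / (Nat.factorial i : ℝ)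

/-- The even-parity eigenfunction
`v_k(t) = e^{-t^{2n+2}/(2n+2)} L_k^{(-1/(2n+2))}(t^{2n+2}/(n+1))`. -/
noncomputable def vk (n k : ℕ) (t : ℝ) : ℝ :=
  Real.exp (-(t ^ (2 * n + 2)) / (2 * (n : ℝ) + 2)) *
    laguerre (-(1 / (2 * (n : ℝ) + 2))) k (t ^ (2 * n + 2) / ((n : ℝ) + 1))

/-- The operator `t d/dt` acting on functions on `ℝ`. -/
noncomputable def tD (f : ℝ → ℝ) : ℝ → ℝ := fun t => t * deriv f t

open Finset

/-- coefficient of `s^m` in `laguerre a k`. -/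
noncomputable def lcoef (a : ℝ) (k m : ℕ) : ℝ :=
  if m ≤ k then (-1 : ℝ) ^ m * genBinom ((k : ℝ) + a) (k - m) / (Nat.factorial m : ℝ) else 0

lemma prod_succ (x : ℝ) (j : ℕ) :
    ∏ i ∈ range (j+1), (x - i) = (∏ i ∈ range j, (x - i)) * (x - j) := by
  simpa using Finset.prod_range_succ (fun i => x - (i:ℝ)) j

lemma prod_succ' (x : ℝ) (j : ℕ) :
    ∏ i ∈ range (j+1), (x - i) = x * ∏ i ∈ range j, (x - 1 - i) := by
  rw [Finset.prod_range_succ']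
  simp only [Nat.cast_zero, sub_zero, Nat.cast_add, Nat.cast_one]
  rw [mul_comm]
  congr 1
  apply Finset.prod_congr rfl
  intro i _
  ring

lemma prod_succ'' (y : ℝ) (j : ℕ) :
    ∏ i ∈ range (j+1), (y + 1 - i) = (y + 1) * ∏ i ∈ range j, (y - i) := by
  rw [Finset.prod_range_succ']
  simp only [Nat.cast_zero, sub_zero, Nat.cast_add, Nat.cast_one]
  rw [mul_comm]
  congr 1
  exact Finset.prod_congr rfl fun i _ => by ring

lemma fac_ne (N : ℕ) : (Nat.factorial N : ℝ) ≠ 0 :=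
  Nat.cast_ne_zero.mpr (Nat.factorial_ne_zero N)

lemma gen4 (a b : ℝ) (m' j'' : ℕ) (hb : b = (m' : ℝ) + j'' + 2 + a) :
    2*((m':ℝ)+1)*((-1:ℝ)^(m'+1) * genBinom b (j''+1) / (Nat.factorial (m'+1)))
      - ((-1:ℝ)^m' * genBinom b (j''+2) / (Nat.factorial m'))
    = ((m':ℝ)+j''+3) * ((-1:ℝ)^(m'+1) * genBinom (b+1) (j''+2) / (Nat.factorial (m'+1)))
      - (a+1)*((-1:ℝ)^(m'+1) * genBinom b (j''+1) / (Nat.factorial (m'+1)))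
      - b*((-1:ℝ)^(m'+1) * genBinom (b-1) j'' / (Nat.factorial (m'+1))) := by
  have h1 : ∏ i ∈ range (j''+1), (b - i) = b * ∏ i ∈ range j'', (b - 1 - i) :=
    prod_succ' b j''
  have h2 : ∏ i ∈ range (j''+2), (b - i)
      = (b * ∏ i ∈ range j'', (b - 1 - i)) * (b - (j''+1)) := by
    rw [prod_succ b (j''+1), h1]; push_cast; ring
  have h3 : ∏ i ∈ range (j''+2), (b + 1 - i)
      = (b+1) * (b * ∏ i ∈ range j'', (b - 1 - i)) := by
    rw [prod_succ'' b (j''+1), h1]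
  simp only [genBinom, h1, h2, h3]
  have e1 : ∏ i ∈ range j'', (b - 1 - i) = ∏ i ∈ range j'', (b - 1 - i) := rfl
  set P := ∏ i ∈ range j'', (b - 1 - i) with hP
  simp only [Nat.factorial_succ]
  push_cast
  rw [hb]
  field_simp
  ring

lemma lcoef_eq {a : ℝ} {k m : ℕ} (h : m ≤ k) :
    lcoef a k m = (-1:ℝ)^m * genBinom ((k:ℝ)+a) (k-m) / (Nat.factorial m) := if_pos h

lemma lcoef_zero {a : ℝ} {k m : ℕ} (h : ¬ m ≤ k) : lcoef a k m = 0 := if_neg h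

lemma gen3 (a b : ℝ) (j'' : ℕ) (hb : b = (j'' : ℝ) + 1 + a) :
    (0:ℝ) = ((j'':ℝ)+2) * genBinom (b+1) (j''+2) - (a+1) * genBinom b (j''+1)
      - b * genBinom (b-1) j'' := by
  have h1 : ∏ i ∈ range (j''+1), (b - i) = b * ∏ i ∈ range j'', (b - 1 - i) :=
    prod_succ' b j''
  have h3 : ∏ i ∈ range (j''+2), (b + 1 - i)
      = (b+1) * (b * ∏ i ∈ range j'', (b - 1 - i)) := by
    rw [prod_succ'' b (j''+1), h1]
  simp only [genBinom, h1, h3]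
  set P := ∏ i ∈ range j'', (b - 1 - i) with hP
  simp only [Nat.factorial_succ]
  push_cast
  rw [hb]
  field_simp
  ring

lemma genBinom_zero (x : ℝ) : genBinom x 0 = 1 := by simp [genBinom]

lemma coef_id (a : ℝ) (k m : ℕ) (hm : m ≤ k + 1) :
    2*(m:ℝ)*lcoef a k m - (if m = 0 then 0 else lcoef a k (m-1)) =
    ((k:ℝ)+1)*lcoef a (k+1) m - (a+1)*lcoef a k m
      - (if k = 0 then 0 else ((k:ℝ)+a)*lcoef a (k-1) m) := by
  rcases Nat.lt_or_ge k m with hA | hB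
  · -- m = k + 1
    have hm1 : m = k + 1 := by omega
    subst hm1
    have h0 : lcoef a k (k+1) = 0 := lcoef_zero (by omega)
    have h1 : lcoef a k (k+1-1) = (-1:ℝ)^k / (Nat.factorial k) := by
      rw [show k+1-1 = k from rfl, lcoef_eq le_rfl, Nat.sub_self, genBinom_zero, mul_one]
    have h2 : lcoef a (k+1) (k+1) = (-1:ℝ)^(k+1) / (Nat.factorial (k+1)) := by
      rw [lcoef_eq le_rfl, Nat.sub_self, genBinom_zero, mul_one]
    have h3 : (if k = 0 then (0:ℝ) else ((k:ℝ)+a)*lcoef a (k-1) (k+1)) = 0 := by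
      split
      · rfl
      · rw [lcoef_zero (by omega), mul_zero]
    rw [h0, h1, h2, h3, if_neg (by omega : ¬ (k+1 = 0))]
    rw [Nat.factorial_succ]
    push_cast [pow_succ]
    field_simp
    ring
  · -- m ≤ k
    obtain ⟨j, rfl⟩ : ∃ j, k = m + j := ⟨k - m, by omega⟩
    rcases j with _ | j''
    · -- j = 0, k = m
      rcases m with _ | m'
      · -- k = m = 0
        simp only [lcoef, genBinom]
        norm_num [Finset.prod_range_succ]
        ring
      · -- k = m = m'+1
        have h1 : lcoef a (m'+1) (m'+1) = (-1:ℝ)^(m'+1) / (Nat.factorial (m'+1)) := by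
          rw [lcoef_eq le_rfl, Nat.sub_self, genBinom_zero, mul_one]
        have h2 : lcoef a (m'+1) (m'+1-1)
            = (-1:ℝ)^(m') * (((m'+1:ℕ):ℝ)+a) / (Nat.factorial m') := by
          rw [show m'+1-1 = m' from rfl, lcoef_eq (by omega),
            show m'+1-m' = 1 by omega]
          norm_num [genBinom, Finset.prod_range_succ]
        have h3 : lcoef a (m'+1+1) (m'+1)
            = (-1:ℝ)^(m'+1) * (((m'+1+1:ℕ):ℝ)+a) / (Nat.factorial (m'+1)) := by
          rw [lcoef_eq (by omega), show m'+1+1-(m'+1) = 1 by omega]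
          norm_num [genBinom, Finset.prod_range_succ]
        have h4 : lcoef a (m'+1-1) (m'+1) = 0 := lcoef_zero (by omega)
        rw [if_neg (by omega : ¬ (m'+1 = 0)), if_neg (by omega : ¬ (m'+1 = 0)),
          h1, h2, h3, h4]
        rw [show m'+1+0 = m'+1 from rfl]
        simp only [Nat.factorial_succ]
        push_cast [pow_succ]
        field_simp
        ring
    · -- j = j''+1
      rcases m with _ | m'
      · -- m = 0
        have h1 : lcoef a (0+(j''+1)) 0 = genBinom (((j''+1:ℕ):ℝ)+a) (j''+1) := by
          rw [show 0+(j''+1) = j''+1 by omega, lcoef_eq (by omega)]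
          norm_num [Nat.factorial]
        have h2 : lcoef a (0+(j''+1)+1) 0 = genBinom (((j''+2:ℕ):ℝ)+a) (j''+2) := by
          rw [show 0+(j''+1)+1 = j''+2 by omega, lcoef_eq (by omega)]
          norm_num [Nat.factorial]
        have h3 : lcoef a (0+(j''+1)-1) 0 = genBinom (((j'':ℕ):ℝ)+a) j'' := by
          rw [show 0+(j''+1)-1 = j'' by omega, lcoef_eq (by omega)]
          norm_num [Nat.factorial]
        rw [if_pos rfl, if_neg (by omega : ¬ (0+(j''+1) = 0)), h1, h2, h3]
        have key := gen3 a (((j''+1:ℕ):ℝ)+a) j'' (by push_cast; ring)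
        have e1 : ((j''+1:ℕ):ℝ)+a+1 = ((j''+2:ℕ):ℝ)+a := by push_cast; ring
        have e2 : ((j''+1:ℕ):ℝ)+a-1 = ((j'':ℕ):ℝ)+a := by push_cast; ring
        rw [e1, e2] at key
        push_cast at key ⊢
        linarith [key]
      · -- m = m'+1, generic case
        set k := m'+1+(j''+1) with hk
        have hkk : k = m'+j''+2 := by omega
        have h1 : lcoef a k (m'+1)
            = (-1:ℝ)^(m'+1) * genBinom ((k:ℝ)+a) (j''+1) / (Nat.factorial (m'+1)) := by
          rw [lcoef_eq (by omega), show k-(m'+1) = j''+1 by omega]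
        have h2 : lcoef a k (m'+1-1)
            = (-1:ℝ)^(m') * genBinom ((k:ℝ)+a) (j''+2) / (Nat.factorial m') := by
          rw [show m'+1-1 = m' from rfl, lcoef_eq (by omega), show k-m' = j''+2 by omega]
        have h3 : lcoef a (k+1) (m'+1)
            = (-1:ℝ)^(m'+1) * genBinom (((k:ℝ)+a)+1) (j''+2) / (Nat.factorial (m'+1)) := by
          rw [lcoef_eq (by omega), show k+1-(m'+1) = j''+2 by omega,
            show ((k+1:ℕ):ℝ)+a = ((k:ℝ)+a)+1 by push_cast; ring]
        have h4 : lcoef a (k-1) (m'+1)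
            = (-1:ℝ)^(m'+1) * genBinom (((k:ℝ)+a)-1) j'' / (Nat.factorial (m'+1)) := by
          rw [lcoef_eq (by omega), show k-1-(m'+1) = j'' by omega,
            show ((k-1:ℕ):ℝ)+a = ((k:ℝ)+a)-1 by
              rw [show k-1 = m'+j''+1 by omega, hkk]; push_cast; ring]
        rw [if_neg (by omega : ¬ (m'+1 = 0)), if_neg (by omega : ¬ (k = 0)),
          h1, h2, h3, h4]
        have key := gen4 a ((k:ℝ)+a) m' j'' (by rw [hkk]; push_cast; ring)
        have ek : (k:ℝ)+1 = (m':ℝ)+j''+3 := by rw [hkk]; push_cast; ring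
        rw [ek]
        push_cast at key ⊢
        linear_combination key

/-- derivative coefficient sum -/
noncomputable def lagD (a : ℝ) (k : ℕ) (s : ℝ) : ℝ :=
  ∑ m ∈ range (k+1), lcoef a k m * ((m : ℝ) * s^(m-1))

lemma laguerre_eq_sum (a : ℝ) (k : ℕ) (s : ℝ) {M : ℕ} (h : k + 1 ≤ M) :
    laguerre a k s = ∑ m ∈ range M, lcoef a k m * s^m := by
  have e1 : laguerre a k s = ∑ m ∈ range (k+1), lcoef a k m * s^m := by
    rw [laguerre]
    refine Finset.sum_congr rfl fun i hi => ?_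
    rw [lcoef_eq (Nat.lt_succ_iff.mp (Finset.mem_range.mp hi))]
    ring
  rw [e1]
  refine Finset.sum_subset (Finset.range_subset_range.mpr h) fun m _ hm => ?_
  rw [lcoef_zero (by simp at hm; omega), zero_mul]

lemma laguerre_rec (a : ℝ) (k : ℕ) (s : ℝ) :
    2*s*(lagD a k s) - s * laguerre a k s
    = ((k:ℝ)+1) * laguerre a (k+1) s - (a+1) * laguerre a k s
      - (if k = 0 then 0 else ((k:ℝ)+a) * laguerre a (k-1) s) := by
  have L1 : 2*s*(lagD a k s) = ∑ m ∈ range (k+2), 2*(m:ℝ)*lcoef a k m * s^m := by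
    rw [lagD, Finset.mul_sum, Finset.sum_range_succ (n := k+1),
      lcoef_zero (by omega : ¬ (k+1 ≤ k))]
    simp only [zero_mul, mul_zero, add_zero]
    refine Finset.sum_congr rfl fun m _ => ?_
    cases m with
    | zero => simp
    | succ m' => push_cast; ring
  have L2 : s * laguerre a k s
      = ∑ m ∈ range (k+2), (if m = 0 then 0 else lcoef a k (m-1)) * s^m := by
    rw [laguerre_eq_sum a k s (le_refl (k+1)), Finset.mul_sum,
      Finset.sum_range_succ' (fun m => (if m = 0 then (0:ℝ) else lcoef a k (m-1)) * s^m) (k+1)]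
    rw [if_pos rfl, zero_mul, add_zero]
    refine Finset.sum_congr rfl fun m _ => ?_
    rw [if_neg (Nat.succ_ne_zero m), Nat.add_sub_cancel]
    ring
  rw [L1, L2, ← Finset.sum_sub_distrib]
  cases k with
  | zero =>
    simp only [if_pos rfl]
    simp [laguerre, genBinom, Finset.prod_range_succ, lcoef, Finset.sum_range_succ,
      Nat.factorial]
    ring
  | succ K =>
    rw [if_neg (Nat.succ_ne_zero K)]
    rw [laguerre_eq_sum a (K+1+1) s (le_refl _),
      laguerre_eq_sum a (K+1) s (by omega : K+1+1 ≤ K+1+2),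
      laguerre_eq_sum a (K+1-1) s (by omega : (K+1-1)+1 ≤ K+1+2)]
    rw [Finset.mul_sum, Finset.mul_sum, Finset.mul_sum, ← Finset.sum_sub_distrib,
      ← Finset.sum_sub_distrib]
    refine Finset.sum_congr rfl fun m hm => ?_
    have hm' : m ≤ K + 1 + 1 := by simp at hm; omega
    have key := coef_id a (K+1) m hm'
    rw [if_neg (Nat.succ_ne_zero K)] at key
    have e : 2*(m:ℝ)*lcoef a (K+1) m * s^m
        - (if m = 0 then 0 else lcoef a (K+1) (m-1)) * s^m
        = (2*(m:ℝ)*lcoef a (K+1) m - (if m = 0 then 0 else lcoef a (K+1) (m-1))) * s^m := by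
      ring
    rw [e, key]
    push_cast
    ring

lemma hasDerivAt_laguerre (a : ℝ) (k : ℕ) (s : ℝ) :
    HasDerivAt (laguerre a k) (lagD a k s) s := by
  have e : laguerre a k = fun s => ∑ m ∈ range (k+1), lcoef a k m * s^m :=
    funext fun s => laguerre_eq_sum a k s le_rfl
  rw [e, lagD]
  exact HasDerivAt.fun_sum fun m _ => (hasDerivAt_pow m s).const_mul (lcoef a k m)

lemma hasDerivAt_vk (n k : ℕ) (t : ℝ) :
    HasDerivAt (vk n k)
      (Real.exp (-(t^(2*n+2))/(2*(n:ℝ)+2)) * (-(((2*n+2:ℕ):ℝ) * t^(2*n+1))/(2*(n:ℝ)+2))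
          * laguerre (-(1/(2*(n:ℝ)+2))) k (t^(2*n+2)/((n:ℝ)+1))
        + Real.exp (-(t^(2*n+2))/(2*(n:ℝ)+2)) *
          (lagD (-(1/(2*(n:ℝ)+2))) k (t^(2*n+2)/((n:ℝ)+1))
            * (((2*n+2:ℕ):ℝ) * t^(2*n+1)/((n:ℝ)+1)))) t := by
  have hpow : HasDerivAt (fun t : ℝ => t^(2*n+2)) (((2*n+2:ℕ):ℝ) * t^(2*n+1)) t := by
    simpa using hasDerivAt_pow (2*n+2) t
  have h1 : HasDerivAt (fun t : ℝ => -(t^(2*n+2))/(2*(n:ℝ)+2))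
      (-(((2*n+2:ℕ):ℝ)*t^(2*n+1))/(2*(n:ℝ)+2)) t := hpow.neg.div_const _
  have h2 := h1.exp
  have h3 : HasDerivAt (fun t : ℝ => t^(2*n+2)/((n:ℝ)+1))
      (((2*n+2:ℕ):ℝ)*t^(2*n+1)/((n:ℝ)+1)) t := hpow.div_const _
  have h4 := (hasDerivAt_laguerre (-(1/(2*(n:ℝ)+2))) k (t^(2*n+2)/((n:ℝ)+1))).comp t h3
  exact h2.mul h4

lemma differentiable_vk (n k : ℕ) : Differentiable ℝ (vk n k) :=
  fun t => (hasDerivAt_vk n k t).differentiableAt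

lemma tD_vk (n k : ℕ) (t : ℝ) :
    tD (vk n k) t = ((n:ℝ)+1) * (((k:ℝ)+1) * vk n (k+1) t
      - ((-(1/(2*(n:ℝ)+2)))+1) * vk n k t
      - (if k = 0 then 0 else ((k:ℝ)+(-(1/(2*(n:ℝ)+2)))) * vk n (k-1) t)) := by
  have hn1 : ((n:ℝ)+1) ≠ 0 := by positivity
  have h2n : (2*(n:ℝ)+2) ≠ 0 := by positivity
  set a := (-(1/(2*(n:ℝ)+2))) with ha
  set S := t^(2*n+2)/((n:ℝ)+1) with hS
  set E := Real.exp (-(t^(2*n+2))/(2*(n:ℝ)+2)) with hE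
  have hvk : ∀ K : ℕ, vk n K t = E * laguerre a K S := fun K => rfl
  rw [tD, (hasDerivAt_vk n k t).deriv]
  have hpow' : t * t^(2*n+1) = ((n:ℝ)+1) * S := by
    rw [hS]
    field_simp
    rw [pow_succ]
    ring
  have expand : t * (E * (-(((2*n+2:ℕ):ℝ) * t^(2*n+1))/(2*(n:ℝ)+2)) * laguerre a k S
        + E * (lagD a k S * (((2*n+2:ℕ):ℝ) * t^(2*n+1)/((n:ℝ)+1))))
      = ((n:ℝ)+1) * E * (2*S*(lagD a k S) - S * laguerre a k S) := by
    have c2 : ((2*n+2:ℕ):ℝ) = 2*(n:ℝ)+2 := by push_cast; ring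
    have e1 : (-((2*(n:ℝ)+2) * t^(2*n+1))/(2*(n:ℝ)+2)) = -t^(2*n+1) := by
      field_simp
    have e2 : (2*(n:ℝ)+2) * t^(2*n+1)/((n:ℝ)+1) = 2 * t^(2*n+1) := by
      field_simp
    rw [c2, e1, e2]
    linear_combination (2*E*(lagD a k S) - E*(laguerre a k S)) * hpow'
  rw [expand, laguerre_rec a k S]
  rw [hvk (k+1), hvk k]
  split_ifs with hk
  · push_cast
    ring
  · rw [hvk (k-1)]
    push_cast
    ring

noncomputable def V (n : ℕ) (z : ℤ) (t : ℝ) : ℝ := if 0 ≤ z then vk n z.toNat t else 0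

lemma differentiable_V (n : ℕ) (z : ℤ) : Differentiable ℝ (V n z) := by
  by_cases h : 0 ≤ z
  · have e : V n z = vk n z.toNat := funext fun t => if_pos h
    rw [e]; exact differentiable_vk n z.toNat
  · have e : V n z = fun _ => 0 := funext fun t => if_neg h
    rw [e]; exact differentiable_const 0

noncomputable def coA (n : ℕ) (z : ℤ) : ℝ := ((n:ℝ)+1)*((z:ℝ)+1)
noncomputable def coB (n : ℕ) : ℝ := ((n:ℝ)+1)*((-(1/(2*(n:ℝ)+2)))+1)
noncomputable def coC (n : ℕ) (z : ℤ) : ℝ :=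
  if z ≤ 0 then 0 else ((n:ℝ)+1)*((z:ℝ)+(-(1/(2*(n:ℝ)+2))))

lemma tD_V (n : ℕ) (z : ℤ) (t : ℝ) :
    tD (V n z) t = coA n z * V n (z+1) t - coB n * V n z t - coC n z * V n (z-1) t := by
  by_cases hz : 0 ≤ z
  · obtain ⟨k, rfl⟩ := Int.eq_ofNat_of_zero_le hz
    have hV : V n (k:ℤ) = vk n k := by funext u; simp [V]
    have h1 : V n ((k:ℤ)+1) t = vk n (k+1) t := by
      simp only [V, if_pos (by omega : (0:ℤ) ≤ (k:ℤ)+1)]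
      norm_num
    rw [hV, tD_vk, h1]
    cases k with
    | zero =>
      simp only [coA, coB, coC, Nat.cast_zero, Int.cast_zero]
      norm_num
      ring
    | succ K =>
      have h3 : V n (((K+1:ℕ):ℤ)-1) t = vk n K t := by
        simp only [V, if_pos (by omega : (0:ℤ) ≤ ((K+1:ℕ):ℤ)-1)]
        norm_num
      rw [h3, coA, coB, coC, if_neg (by omega : ¬ ((K+1:ℕ):ℤ) ≤ 0),
        if_neg (Nat.succ_ne_zero K), show K+1-1 = K from rfl]
      push_cast
      ring
  · have hV : V n z = fun _ => 0 := by funext u; simp [V, hz]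
    rw [hV, tD]
    simp only [deriv_const', mul_zero]
    have hC : coC n z = 0 := by rw [coC, if_pos (by omega : z ≤ 0)]
    have hz0 : V n z t = 0 := by rw [hV]
    have hA : coA n z * V n (z+1) t = 0 := by
      rcases eq_or_ne z (-1) with rfl | hne
      · rw [coA]; norm_num
      · have : V n (z+1) t = 0 := by
          simp only [V, if_neg (by omega : ¬ (0:ℤ) ≤ z+1)]
        rw [this, mul_zero]
    rw [hA, hC]
    simp

noncomputable def del (n k : ℕ) : ℕ → ℤ → ℝ
  | 0 => fun j => if j = 0 then 1 else 0
  | (i+1) => fun j => coA n ((k:ℤ)+j-1) * del n k i (j-1) - coB n * del n k i j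
      - coC n ((k:ℤ)+j+1) * del n k i (j+1)

lemma del_support (n k : ℕ) :
    ∀ i (j : ℤ), del n k i j ≠ 0 → -(i:ℤ) ≤ j ∧ j ≤ i ∧ 0 ≤ (k:ℤ)+j := by
  intro i
  induction i with
  | zero =>
    intro j h
    by_cases hj : j = 0
    · subst hj; refine ⟨by norm_num, by norm_num, by omega⟩
    · exact absurd (if_neg hj) h
  | succ i IH =>
    intro j h
    by_contra hcon
    apply h
    have z1 : coA n ((k:ℤ)+j-1) * del n k i (j-1) = 0 := by
      rcases eq_or_ne (del n k i (j-1)) 0 with h0 | h0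
      · rw [h0, mul_zero]
      · obtain ⟨a1, a2, a3⟩ := IH _ h0
        exfalso; apply hcon
        push_cast
        refine ⟨by omega, by omega, by omega⟩
    have z2 : coB n * del n k i j = 0 := by
      rcases eq_or_ne (del n k i j) 0 with h0 | h0
      · rw [h0, mul_zero]
      · obtain ⟨a1, a2, a3⟩ := IH _ h0
        exfalso; apply hcon
        push_cast
        refine ⟨by omega, by omega, by omega⟩
    have z3 : coC n ((k:ℤ)+j+1) * del n k i (j+1) = 0 := by
      rcases le_or_gt ((k:ℤ)+j+1) 0 with hle | hlt
      · rw [coC, if_pos hle, zero_mul]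
      · rcases eq_or_ne (del n k i (j+1)) 0 with h0 | h0
        · rw [h0, mul_zero]
        · obtain ⟨a1, a2, a3⟩ := IH _ h0
          exfalso; apply hcon
          push_cast
          refine ⟨by omega, by omega, by omega⟩
    show coA n ((k:ℤ)+j-1) * del n k i (j-1) - coB n * del n k i j
      - coC n ((k:ℤ)+j+1) * del n k i (j+1) = 0
    rw [z1, z2, z3]
    ring

lemma del_top (n k : ℕ) :
    ∀ i, del n k i i = ((n:ℝ)+1)^i * (Nat.factorial (k+i)) / (Nat.factorial k) := by
  intro i
  induction i with
  | zero =>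
    show (if (0:ℤ) = 0 then (1:ℝ) else 0) = _
    rw [if_pos rfl]
    rw [pow_zero, Nat.add_zero, one_mul, div_self (Nat.cast_ne_zero.mpr (Nat.factorial_ne_zero k))]
  | succ i IH =>
    have z2 : del n k i ((i:ℤ)+1) = 0 := by
      by_contra h0
      obtain ⟨a1, a2, a3⟩ := del_support n k i _ h0
      omega
    have z3 : del n k i ((i:ℤ)+2) = 0 := by
      by_contra h0
      obtain ⟨a1, a2, a3⟩ := del_support n k i _ h0
      omega
    show coA n ((k:ℤ)+(i+1:ℕ)-1) * del n k i (((i+1:ℕ):ℤ)-1) - coB n * del n k i ((i+1:ℕ):ℤ)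
      - coC n ((k:ℤ)+((i+1:ℕ):ℤ)+1) * del n k i (((i+1:ℕ):ℤ)+1) = _
    rw [show (((i+1:ℕ):ℤ)-1) = (i:ℤ) by push_cast; ring,
      show ((i+1:ℕ):ℤ) = (i:ℤ)+1 by push_cast; ring,
      show ((i:ℤ)+1)+1 = (i:ℤ)+2 by ring]
    rw [z2, z3, IH, coA]
    rw [show k+(i+1) = (k+i)+1 from rfl, Nat.factorial_succ]
    have hk : (Nat.factorial k : ℝ) ≠ 0 := Nat.cast_ne_zero.mpr (Nat.factorial_ne_zero k)
    push_cast
    field_simp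
    ring

lemma del_bound (n k : ℕ) :
    ∀ i (j : ℤ), |del n k i j| ≤ (3*((n:ℝ)+1))^i * (Nat.factorial (k+i)) / (Nat.factorial k) := by
  have fkne : (Nat.factorial k : ℝ) ≠ 0 := Nat.cast_ne_zero.mpr (Nat.factorial_ne_zero k)
  have tri : ∀ x y z : ℝ, |x - y - z| ≤ |x| + |y| + |z| := by
    intro x y z
    have h1 : |x - y - z| ≤ |x - y| + |z| := by
      simpa [sub_eq_add_neg, abs_neg] using abs_add_le (x - y) (-z)
    have h2 : |x - y| ≤ |x| + |y| := by
      simpa [sub_eq_add_neg, abs_neg] using abs_add_le x (-y)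
    linarith
  have hinv1 : 1/(2*(n:ℝ)+2) ≤ 1 := by
    rw [div_le_one (by positivity)]
    have := Nat.cast_nonneg (α := ℝ) n
    linarith
  have hinv0 : 0 < 1/(2*(n:ℝ)+2) := by positivity
  intro i
  induction i with
  | zero =>
    intro j
    show |if j = 0 then (1:ℝ) else 0| ≤ _
    rw [pow_zero, Nat.add_zero, one_mul, div_self fkne]
    split_ifs <;> simp
  | succ i IH =>
    intro j
    set Bd := (3*((n:ℝ)+1))^i * (Nat.factorial (k+i)) / (Nat.factorial k) with hBd
    have hBd0 : 0 ≤ Bd := by positivity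
    set M := ((n:ℝ)+1)*((k:ℝ)+i+1) with hM
    have hM0 : 0 ≤ M := by positivity
    have T1 : |coA n ((k:ℤ)+j-1) * del n k i (j-1)| ≤ M * Bd := by
      rcases eq_or_ne (del n k i (j-1)) 0 with h0 | h0
      · rw [h0, mul_zero, abs_zero]; positivity
      · obtain ⟨a1, a2, a3⟩ := del_support n k i _ h0
        rw [abs_mul]
        refine mul_le_mul ?_ (IH _) (abs_nonneg _) hM0
        rw [coA, abs_mul, abs_of_nonneg (by positivity : (0:ℝ) ≤ (n:ℝ)+1), hM]
        refine mul_le_mul_of_nonneg_left ?_ (by positivity)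
        have h1 : (0:ℤ) ≤ (k:ℤ)+j-1+1 := by omega
        have h2 : (k:ℤ)+j-1+1 ≤ (k:ℤ)+i+1 := by omega
        calc |(((k:ℤ)+j-1 : ℤ):ℝ)+1| = |(((k:ℤ)+j-1+1 : ℤ):ℝ)| := by push_cast; ring_nf
          _ = (((k:ℤ)+j-1+1 : ℤ):ℝ) := abs_of_nonneg (by exact_mod_cast h1)
          _ ≤ (((k:ℤ)+i+1 : ℤ):ℝ) := by exact_mod_cast h2
          _ = (k:ℝ)+i+1 := by push_cast; ring
    have T2 : |coB n * del n k i j| ≤ M * Bd := by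
      rw [abs_mul]
      refine mul_le_mul ?_ (IH _) (abs_nonneg _) hM0
      rw [coB, abs_mul, abs_of_nonneg (by positivity : (0:ℝ) ≤ (n:ℝ)+1), hM]
      refine mul_le_mul_of_nonneg_left ?_ (by positivity)
      rw [abs_of_nonneg (by linarith : (0:ℝ) ≤ -(1/(2*(n:ℝ)+2))+1)]
      have := Nat.cast_nonneg (α := ℝ) k
      have := Nat.cast_nonneg (α := ℝ) i
      linarith
    have T3 : |coC n ((k:ℤ)+j+1) * del n k i (j+1)| ≤ M * Bd := by
      rcases le_or_gt ((k:ℤ)+j+1) 0 with hle | hlt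
      · rw [coC, if_pos hle, zero_mul, abs_zero]; positivity
      · rcases eq_or_ne (del n k i (j+1)) 0 with h0 | h0
        · rw [h0, mul_zero, abs_zero]; positivity
        · obtain ⟨a1, a2, a3⟩ := del_support n k i _ h0
          rw [abs_mul]
          refine mul_le_mul ?_ (IH _) (abs_nonneg _) hM0
          rw [coC, if_neg (not_le.mpr hlt), abs_mul,
            abs_of_nonneg (by positivity : (0:ℝ) ≤ (n:ℝ)+1), hM]
          refine mul_le_mul_of_nonneg_left ?_ (by positivity)
          have h1 : (1:ℤ) ≤ (k:ℤ)+j+1 := hlt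
          have h2 : (k:ℤ)+j+1 ≤ (k:ℤ)+i := by omega
          have h1' : (1:ℝ) ≤ (((k:ℤ)+j+1 : ℤ):ℝ) := by exact_mod_cast h1
          have h2' : (((k:ℤ)+j+1 : ℤ):ℝ) ≤ (k:ℝ)+i := by
            calc (((k:ℤ)+j+1 : ℤ):ℝ) ≤ (((k:ℤ)+i : ℤ):ℝ) := by exact_mod_cast h2
              _ = (k:ℝ)+i := by push_cast; ring
          rw [abs_of_nonneg (by linarith)]
          linarith
    have step : |del n k (i+1) j| ≤ M * Bd + M * Bd + M * Bd := by
      refine le_trans ?_ (add_le_add (add_le_add T1 T2) T3)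
      exact tri _ _ _
    refine step.trans ?_
    rw [show k+(i+1) = (k+i)+1 from rfl, Nat.factorial_succ, pow_succ, hBd, hM]
    apply le_of_eq
    push_cast
    ring

lemma sum_Icc_shift (f : ℤ → ℝ) (a b c : ℤ) :
    ∑ j ∈ Finset.Icc (a+c) (b+c), f j = ∑ j ∈ Finset.Icc a b, f (j+c) := by
  rw [← Finset.map_add_right_Icc, Finset.sum_map]
  rfl

lemma sum_ext (f : ℤ → ℝ) (s t : Finset ℤ) (h : ∀ j, f j ≠ 0 → j ∈ s ∩ t) :
    ∑ j ∈ s, f j = ∑ j ∈ t, f j := by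
  have hs : ∑ j ∈ s ∩ t, f j = ∑ j ∈ s, f j :=
    Finset.sum_subset Finset.inter_subset_left
      (fun j _ hj2 => by_contra fun hne => hj2 (h j hne))
  have ht : ∑ j ∈ s ∩ t, f j = ∑ j ∈ t, f j :=
    Finset.sum_subset Finset.inter_subset_right
      (fun j _ hj2 => by_contra fun hne => hj2 (h j hne))
  rw [← hs, ht]

lemma del_expand (n k : ℕ) :
    ∀ i, ∀ t : ℝ, tD^[i] (vk n k) t
      = ∑ j ∈ Finset.Icc (-(i:ℤ)) (i:ℤ), del n k i j * V n ((k:ℤ)+j) t := by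
  intro i
  induction i with
  | zero =>
    intro t
    show vk n k t = _
    rw [Nat.cast_zero, neg_zero, Finset.Icc_self, Finset.sum_singleton]
    show vk n k t = (if (0:ℤ) = 0 then (1:ℝ) else 0) * V n ((k:ℤ)+0) t
    rw [if_pos rfl, one_mul]
    simp [V]
  | succ i IH =>
    intro t
    rw [Function.iterate_succ_apply']
    have hF : tD^[i] (vk n k)
        = fun t => ∑ j ∈ Finset.Icc (-(i:ℤ)) (i:ℤ), del n k i j * V n ((k:ℤ)+j) t :=
      funext IH
    rw [hF, tD]
    rw [deriv_fun_sum (fun j _ => ((differentiable_V n ((k:ℤ)+j)).differentiableAt).const_mul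
      (del n k i j))]
    rw [Finset.mul_sum]
    have e1 : ∀ j ∈ Finset.Icc (-(i:ℤ)) (i:ℤ),
        t * deriv (fun t => del n k i j * V n ((k:ℤ)+j) t) t
        = del n k i j * tD (V n ((k:ℤ)+j)) t := by
      intro j _
      rw [deriv_const_mul _ ((differentiable_V n ((k:ℤ)+j)).differentiableAt), tD]
      ring
    rw [Finset.sum_congr rfl e1]
    -- define the three shifted summands
    set f1 : ℤ → ℝ := fun j => del n k i (j-1) * (coA n ((k:ℤ)+j-1) * V n ((k:ℤ)+j) t) with hf1
    set f2 : ℤ → ℝ := fun j => del n k i j * (coB n * V n ((k:ℤ)+j) t) with hf2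
    set f3 : ℤ → ℝ := fun j => del n k i (j+1) * (coC n ((k:ℤ)+j+1) * V n ((k:ℤ)+j) t) with hf3
    have e2 : ∀ j ∈ Finset.Icc (-(i:ℤ)) (i:ℤ),
        del n k i j * tD (V n ((k:ℤ)+j)) t = f1 (j+1) - f2 j - f3 (j-1) := by
      intro j _
      rw [tD_V, hf1, hf2, hf3]
      simp only []
      rw [show (k:ℤ)+(j+1)-1 = (k:ℤ)+j by ring, show j+1-1 = j by ring,
        show (k:ℤ)+(j-1)+1 = (k:ℤ)+j by ring, show j-1+1 = j by ring,
        show (k:ℤ)+j+1 = (k:ℤ)+(j+1) by ring, show (k:ℤ)+j-1 = (k:ℤ)+(j-1) by ring]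
      ring
    rw [Finset.sum_congr rfl e2, Finset.sum_sub_distrib, Finset.sum_sub_distrib]
    have s1 : ∑ j ∈ Finset.Icc (-(i:ℤ)) (i:ℤ), f1 (j+1)
        = ∑ j ∈ Finset.Icc (-((i:ℤ)+1)) ((i:ℤ)+1), f1 j := by
      rw [← sum_Icc_shift f1 (-(i:ℤ)) (i:ℤ) 1]
      refine sum_ext f1 _ _ fun j hj => ?_
      have hd : del n k i (j-1) ≠ 0 := by
        intro h0; apply hj; rw [hf1]; simp only []; rw [h0, zero_mul]
      obtain ⟨a1, a2, a3⟩ := del_support n k i _ hd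
      simp only [Finset.mem_inter, Finset.mem_Icc]
      omega
    have s2 : ∑ j ∈ Finset.Icc (-(i:ℤ)) (i:ℤ), f2 j
        = ∑ j ∈ Finset.Icc (-((i:ℤ)+1)) ((i:ℤ)+1), f2 j := by
      refine sum_ext f2 _ _ fun j hj => ?_
      have hd : del n k i j ≠ 0 := by
        intro h0; apply hj; rw [hf2]; simp only []; rw [h0, zero_mul]
      obtain ⟨a1, a2, a3⟩ := del_support n k i _ hd
      simp only [Finset.mem_inter, Finset.mem_Icc]
      omega
    have s3 : ∑ j ∈ Finset.Icc (-(i:ℤ)) (i:ℤ), f3 (j-1)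
        = ∑ j ∈ Finset.Icc (-((i:ℤ)+1)) ((i:ℤ)+1), f3 j := by
      have h := sum_Icc_shift f3 (-(i:ℤ)) (i:ℤ) (-1)
      calc ∑ j ∈ Finset.Icc (-(i:ℤ)) (i:ℤ), f3 (j-1)
          = ∑ j ∈ Finset.Icc (-(i:ℤ)) (i:ℤ), f3 (j+(-1)) := by
            refine Finset.sum_congr rfl fun j _ => ?_
            rw [sub_eq_add_neg]
        _ = ∑ j ∈ Finset.Icc (-(i:ℤ)+(-1)) ((i:ℤ)+(-1)), f3 j := h.symm
        _ = ∑ j ∈ Finset.Icc (-((i:ℤ)+1)) ((i:ℤ)+1), f3 j := by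
            refine sum_ext f3 _ _ fun j hj => ?_
            have hd : del n k i (j+1) ≠ 0 := by
              intro h0; apply hj; rw [hf3]; simp only []; rw [h0, zero_mul]
            obtain ⟨a1, a2, a3⟩ := del_support n k i _ hd
            simp only [Finset.mem_inter, Finset.mem_Icc]
            omega
    rw [s1, s2, s3, ← Finset.sum_sub_distrib, ← Finset.sum_sub_distrib]
    have hc : ((i+1:ℕ):ℤ) = (i:ℤ)+1 := by push_cast; ring
    rw [hc]
    refine Finset.sum_congr rfl fun j _ => ?_
    show f1 j - f2 j - f3 j = del n k (i+1) j * V n ((k:ℤ)+j) t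
    rw [hf1, hf2, hf3]
    show del n k i (j-1) * (coA n ((k:ℤ)+j-1) * V n ((k:ℤ)+j) t)
        - del n k i j * (coB n * V n ((k:ℤ)+j) t)
        - del n k i (j+1) * (coC n ((k:ℤ)+j+1) * V n ((k:ℤ)+j) t)
      = (coA n ((k:ℤ)+j-1) * del n k i (j-1) - coB n * del n k i j
          - coC n ((k:ℤ)+j+1) * del n k i (j+1)) * V n ((k:ℤ)+j) t
    ring

/-- `(t d/dt)^i v_k = Σ_{j=-i}^{i} δ_j^{k,i} v_{k+j}` (with `v_ℓ ≡ 0` for `ℓ < 0`),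
where `δ_i^{k,i} = (n+1)^i (k+i)!/k!` and `|δ_j^{k,i}| ≤ C^i (k+i)!/k!` for a
constant `C > 0` depending only on `n`. -/
theorem stmt_4 (n : ℕ) (hn : 0 < n) :
    ∃ C : ℝ, 0 < C ∧
      ∀ i k : ℕ, ∃ δ : ℤ → ℝ,
        (∀ t : ℝ,
          tD^[i] (vk n k) t =
            ∑ j ∈ Finset.Icc (-(i : ℤ)) (i : ℤ),
              δ j * (if 0 ≤ (k : ℤ) + j then vk n ((k : ℤ) + j).toNat t else 0)) ∧
        δ (i : ℤ) = ((n : ℝ) + 1) ^ i * (Nat.factorial (k + i) : ℝ) / (Nat.factorial k : ℝ) ∧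
        (∀ j ∈ Finset.Icc (-(i : ℤ)) (i : ℤ),
          |δ j| ≤ C ^ i * (Nat.factorial (k + i) : ℝ) / (Nat.factorial k : ℝ)) := by
  refine ⟨3*((n:ℝ)+1), by positivity, fun i k => ⟨del n k i, fun t => ?_, ?_, fun j _ => ?_⟩⟩
  · exact del_expand n k i t
  · exact del_top n k i
  · exact del_bound n k i j
end

section
/- Each v_k extends to an entire function v_k(z) on ℂ of order exactly 2n+2 and of finite type, and there exist constants c₁ > 0 and C > 0, independent of k, such that |v_k(z)| ≤ C^{k+1} e^{c₁ |z|^{2n+2}} for all z ∈ ℂ and all k ∈ ℤ₊. -/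
open MeasureTheory

/-- The (unnormalized) odd-parity eigenfunction
`w_k(t) = e^{-t^{2n+2}/(2n+2)} t L_k^{(1/(2n+2))}(t^{2n+2}/(n+1))`. -/
noncomputable def wk (n k : ℕ) (t : ℝ) : ℝ :=
  Real.exp (-(t ^ (2 * n + 2)) / (2 * (n : ℝ) + 2)) * t *
    laguerre (1 / (2 * (n : ℝ) + 2)) k (t ^ (2 * n + 2) / ((n : ℝ) + 1))

/-- `v_k` normalized so that `∫_ℝ t^{2n} v_k(t)² dt = 1`. -/
noncomputable def nvk (n k : ℕ) (t : ℝ) : ℝ :=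
  vk n k t / Real.sqrt (∫ s : ℝ, s ^ (2 * n) * (vk n k s) ^ 2)

/-- `w_k` normalized so that `∫_ℝ t^{2n} w_k(t)² dt = 1`. -/
noncomputable def nwk (n k : ℕ) (t : ℝ) : ℝ :=
  wk n k t / Real.sqrt (∫ s : ℝ, s ^ (2 * n) * (wk n k s) ^ 2)

/-- Complex Laguerre polynomial. -/
noncomputable def laguerreC (a : ℝ) (k : ℕ) (s : ℂ) : ℂ :=
  ∑ i ∈ Finset.range (k + 1),
    (-1 : ℂ) ^ i * (genBinom ((k : ℝ) + a) (k - i) : ℂ) * s ^ i / (Nat.factorial i : ℂ)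

/-- The entire extension of `v_k` to `ℂ`. -/
noncomputable def vkC (n k : ℕ) (z : ℂ) : ℂ :=
  Complex.exp (-(z ^ (2 * n + 2)) / (2 * (n : ℂ) + 2)) *
    laguerreC (-(1 / (2 * (n : ℝ) + 2))) k (z ^ (2 * n + 2) / ((n : ℂ) + 1))

/-- The entire extension of the normalized eigenfunction `v_k`. -/
noncomputable def nvkC (n k : ℕ) (z : ℂ) : ℂ :=
  vkC n k z / ((Real.sqrt (∫ s : ℝ, s ^ (2 * n) * (vk n k s) ^ 2) : ℝ) : ℂ)

open Finset Real

lemma prod_cast_desc (k m : ℕ) (hm : m ≤ k) :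
    ∏ i ∈ range m, ((k : ℝ) - i) = (k.descFactorial m : ℝ) := by
  rw [Nat.descFactorial_eq_prod_range, Nat.cast_prod]
  refine Finset.prod_congr rfl fun i hi => ?_
  have : i ≤ k := le_trans (mem_range.mp hi).le hm
  rw [Nat.cast_sub this]

lemma genBinom_pos {a : ℝ} (ha : -1 < a) {k m : ℕ} (hm : m ≤ k) :
    0 < genBinom ((k : ℝ) + a) m := by
  apply div_pos _ (by positivity)
  apply Finset.prod_pos
  intro i hi
  have h1 : i + 1 ≤ k := le_trans (mem_range.mp hi) hm
  have : (i : ℝ) + 1 ≤ (k : ℝ) := by exact_mod_cast h1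
  linarith

lemma genBinom_le_two_pow {a : ℝ} (ha : -1 < a) (ha2 : a ≤ 0) {k m : ℕ} (hm : m ≤ k) :
    genBinom ((k : ℝ) + a) m ≤ 2 ^ k := by
  have hfac : (0:ℝ) < (Nat.factorial m : ℝ) := by positivity
  have h1 : genBinom ((k : ℝ) + a) m ≤ (k.choose m : ℝ) := by
    rw [genBinom, div_le_iff₀ hfac]
    have h2 : ∏ i ∈ range m, ((k : ℝ) + a - i) ≤ ∏ i ∈ range m, ((k : ℝ) - i) := by
      apply Finset.prod_le_prod
      · intro i hi
        have h1 : i + 1 ≤ k := le_trans (mem_range.mp hi) hm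
        have : (i : ℝ) + 1 ≤ (k : ℝ) := by exact_mod_cast h1
        linarith
      · intro i hi; linarith
    calc ∏ i ∈ range m, ((k : ℝ) + a - i) ≤ ∏ i ∈ range m, ((k : ℝ) - i) := h2
      _ = (k.descFactorial m : ℝ) := prod_cast_desc k m hm
      _ = (k.choose m : ℝ) * (Nat.factorial m : ℝ) := by
          rw [← Nat.cast_mul, Nat.descFactorial_eq_factorial_mul_choose]
          push_cast; ring
  have h3 : (k.choose m : ℝ) ≤ 2 ^ k := by
    have h4 : k.choose m ≤ 2 ^ k := by
      rw [← Nat.sum_range_choose k]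
      exact Finset.single_le_sum (f := fun j => k.choose j) (fun j _ => Nat.zero_le _)
        (mem_range.mpr (Nat.lt_succ_of_le hm))
    exact_mod_cast h4
  linarith

lemma genBinom_ge_pow {a : ℝ} (ha : -(1/2) ≤ a) (ha2 : a ≤ 0) (k : ℕ) :
    (2 : ℝ)⁻¹ ^ k ≤ genBinom ((k : ℝ) + a) k := by
  rw [genBinom, le_div_iff₀ (by positivity)]
  have hfact : (Nat.factorial k : ℝ) = ∏ i ∈ range k, ((k : ℝ) - i) := by
    rw [prod_cast_desc k k le_rfl, Nat.descFactorial_self]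
  have hc : (2:ℝ)⁻¹ ^ k = ∏ _i ∈ range k, (2:ℝ)⁻¹ := by
    rw [Finset.prod_const, Finset.card_range]
  rw [hfact, hc, ← Finset.prod_mul_distrib]
  apply Finset.prod_le_prod
  · intro i hi
    have h1 : i + 1 ≤ k := mem_range.mp hi
    have : (i : ℝ) + 1 ≤ (k : ℝ) := by exact_mod_cast h1
    nlinarith
  · intro i hi
    have h1 : i + 1 ≤ k := mem_range.mp hi
    have h2 : (i : ℝ) + 1 ≤ (k : ℝ) := by exact_mod_cast h1
    have : (2:ℝ)⁻¹ * ((k:ℝ) - i) = (k - i) - (1/2) * (k - i) := by ring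
    nlinarith

lemma laguerreC_ofReal (a : ℝ) (k : ℕ) (u : ℝ) :
    laguerreC a k (u : ℂ) = ((laguerre a k u : ℝ) : ℂ) := by
  rw [laguerreC, laguerre]
  push_cast
  rfl

lemma laguerreC_abs_le {a : ℝ} (ha : -1 < a) (ha2 : a ≤ 0) (k : ℕ) (s : ℂ) :
    ‖laguerreC a k s‖ ≤ 2 ^ k * Real.exp (‖s‖) := by
  calc ‖laguerreC a k s‖
      ≤ ∑ i ∈ range (k+1), ‖(-1 : ℂ) ^ i * (genBinom ((k : ℝ) + a) (k - i) : ℂ) * s ^ i / (Nat.factorial i : ℂ)‖ :=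
        norm_sum_le _ _
    _ ≤ ∑ i ∈ range (k+1), 2 ^ k * (‖s‖ ^ i / (Nat.factorial i : ℝ)) := by
        apply Finset.sum_le_sum
        intro i hi
        rw [norm_div, norm_mul, norm_mul, norm_pow, norm_pow]
        simp only [norm_neg, norm_one, one_pow, one_mul, Complex.norm_real, Real.norm_eq_abs,
          Complex.norm_natCast]
        rw [abs_of_pos (genBinom_pos ha (Nat.sub_le k i)), mul_div_assoc]
        apply mul_le_mul_of_nonneg_right (genBinom_le_two_pow ha ha2 (Nat.sub_le k i))
        positivity
    _ = 2 ^ k * ∑ i ∈ range (k+1), ‖s‖ ^ i / (Nat.factorial i : ℝ) := by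
        rw [Finset.mul_sum]
    _ ≤ 2 ^ k * Real.exp (‖s‖) := by
        apply mul_le_mul_of_nonneg_left (Real.sum_le_exp_of_nonneg (by positivity) _)
        positivity

lemma pow_div_factorial_le_exp {x : ℝ} (hx : 0 ≤ x) (i : ℕ) :
    x ^ i / (Nat.factorial i : ℝ) ≤ Real.exp x := by
  calc x ^ i / (Nat.factorial i : ℝ)
      ≤ ∑ j ∈ range (i+1), x ^ j / (Nat.factorial j : ℝ) :=
        Finset.single_le_sum (f := fun j => x ^ j / (Nat.factorial j : ℝ))
          (fun j _ => by positivity) (mem_range.mpr (Nat.lt_succ_self i))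
    _ ≤ Real.exp x := Real.sum_le_exp_of_nonneg hx _

lemma laguerre_abs_le_exp_quarter {a : ℝ} (ha : -1 < a) (ha2 : a ≤ 0) (k : ℕ)
    {u : ℝ} (hu : 0 ≤ u) :
    |laguerre a k u| ≤ 8 ^ (k+1) * Real.exp (u/4) := by
  have key : ∀ i : ℕ, u ^ i / (Nat.factorial i : ℝ) ≤ 4 ^ i * Real.exp (u/4) := by
    intro i
    have h1 : (u/4) ^ i / (Nat.factorial i : ℝ) ≤ Real.exp (u/4) :=
      pow_div_factorial_le_exp (by linarith) i
    have h2 : (u/4) ^ i = u ^ i / 4 ^ i := div_pow u 4 i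
    rw [h2] at h1
    have h4 : (0:ℝ) < 4 ^ i := by positivity
    calc u ^ i / (Nat.factorial i : ℝ) = 4 ^ i * (u ^ i / 4 ^ i / (Nat.factorial i : ℝ)) := by
          field_simp
      _ ≤ 4 ^ i * Real.exp (u/4) := mul_le_mul_of_nonneg_left h1 (by positivity)
  calc |laguerre a k u|
      ≤ ∑ i ∈ range (k+1), |(-1 : ℝ) ^ i * genBinom ((k : ℝ) + a) (k - i) * u ^ i / (Nat.factorial i : ℝ)| :=
        Finset.abs_sum_le_sum_abs _ _
    _ ≤ ∑ i ∈ range (k+1), 2 ^ k * (4 ^ i * Real.exp (u/4)) := by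
        apply Finset.sum_le_sum
        intro i hi
        rw [abs_div, abs_mul, abs_mul, abs_pow, abs_pow, abs_neg, abs_one, one_pow, one_mul,
          abs_of_pos (genBinom_pos ha (Nat.sub_le k i)), abs_of_nonneg hu,
          Nat.abs_cast, mul_div_assoc]
        calc genBinom ((k : ℝ) + a) (k - i) * (u ^ i / (Nat.factorial i : ℝ))
            ≤ 2 ^ k * (u ^ i / (Nat.factorial i : ℝ)) :=
              mul_le_mul_of_nonneg_right (genBinom_le_two_pow ha ha2 (Nat.sub_le k i)) (by positivity)
          _ ≤ 2 ^ k * (4 ^ i * Real.exp (u/4)) :=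
              mul_le_mul_of_nonneg_left (key i) (by positivity)
    _ = 2 ^ k * Real.exp (u/4) * ∑ i ∈ range (k+1), 4 ^ i := by
        rw [Finset.mul_sum]; apply Finset.sum_congr rfl; intro i _; ring
    _ ≤ 8 ^ (k+1) * Real.exp (u/4) := by
        have h5 : ∑ i ∈ range (k+1), (4:ℝ) ^ i ≤ 4 ^ (k+1) := by
          calc ∑ i ∈ range (k+1), (4:ℝ) ^ i = (4 ^ (k+1) - 1)/(4-1) := by
                rw [geom_sum_eq (by norm_num)]
            _ ≤ 4 ^ (k+1) := by
                have : (0:ℝ) < 4 ^ (k+1) := by positivity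
                linarith [this]
        have h6 : (2:ℝ) ^ k * 4 ^ (k+1) ≤ 8 ^ (k+1) := by
          have : (8:ℝ) ^ (k+1) = 2 ^ (k+1) * 4 ^ (k+1) := by
            rw [← mul_pow]; norm_num
          rw [this]
          apply mul_le_mul_of_nonneg_right _ (by positivity)
          exact pow_le_pow_right₀ (by norm_num) (Nat.le_succ k)
        calc 2 ^ k * Real.exp (u/4) * ∑ i ∈ range (k+1), (4:ℝ) ^ i
            ≤ 2 ^ k * Real.exp (u/4) * 4 ^ (k+1) :=
              mul_le_mul_of_nonneg_left h5 (by positivity)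
          _ = 2 ^ k * 4 ^ (k+1) * Real.exp (u/4) := by ring
          _ ≤ 8 ^ (k+1) * Real.exp (u/4) :=
              mul_le_mul_of_nonneg_right h6 (Real.exp_pos _).le

lemma laguerre_ge_of_nonpos {a : ℝ} (ha : -(1/2) ≤ a) (ha2 : a ≤ 0) (k : ℕ)
    {v : ℝ} (hv : v ≤ 0) : (2 : ℝ)⁻¹ ^ k ≤ laguerre a k v := by
  have ha1 : -1 < a := by linarith
  rw [laguerre, Finset.sum_range_succ']
  have h0 : (-1 : ℝ) ^ 0 * genBinom ((k : ℝ) + a) (k - 0) * v ^ 0 / (Nat.factorial 0 : ℝ)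
      = genBinom ((k : ℝ) + a) k := by simp
  rw [h0]
  have h1 : (0:ℝ) ≤ ∑ i ∈ range k,
      (-1 : ℝ) ^ (i+1) * genBinom ((k : ℝ) + a) (k - (i+1)) * v ^ (i+1) / (Nat.factorial (i+1) : ℝ) := by
    apply Finset.sum_nonneg
    intro i hi
    have hb := genBinom_pos ha1 (Nat.sub_le k (i+1))
    have hsgn : (0:ℝ) ≤ (-1 : ℝ) ^ (i+1) * v ^ (i+1) := by
      rw [← mul_pow, neg_one_mul]
      exact pow_nonneg (by linarith) _
    have : (-1 : ℝ) ^ (i+1) * genBinom ((k : ℝ) + a) (k - (i+1)) * v ^ (i+1)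
        = genBinom ((k : ℝ) + a) (k - (i+1)) * ((-1 : ℝ) ^ (i+1) * v ^ (i+1)) := by ring
    rw [this]
    exact div_nonneg (mul_nonneg hb.le hsgn) (by positivity)
  linarith [genBinom_ge_pow ha ha2 k]

lemma laguerre_ge_near_zero {a : ℝ} (ha : -(1/2) ≤ a) (ha2 : a ≤ 0) (k : ℕ)
    {u : ℝ} (h0 : 0 ≤ u) (h1 : u ≤ (4:ℝ)⁻¹ ^ k / 12) :
    (2 : ℝ)⁻¹ ^ k / 2 ≤ laguerre a k u := by
  have ha1 : -1 < a := by linarith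
  have hu1 : u ≤ 1 := by
    have : (4:ℝ)⁻¹ ^ k ≤ 1 := pow_le_one₀ (by norm_num) (by norm_num)
    linarith
  rw [laguerre, Finset.sum_range_succ']
  have h0' : (-1 : ℝ) ^ 0 * genBinom ((k : ℝ) + a) (k - 0) * u ^ 0 / (Nat.factorial 0 : ℝ)
      = genBinom ((k : ℝ) + a) k := by simp
  rw [h0']
  have htail : |∑ i ∈ range k,
      (-1 : ℝ) ^ (i+1) * genBinom ((k : ℝ) + a) (k - (i+1)) * u ^ (i+1) / (Nat.factorial (i+1) : ℝ)|
      ≤ 2 ^ k * (2 * u) := by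
    calc |∑ i ∈ range k, (-1 : ℝ) ^ (i+1) * genBinom ((k : ℝ) + a) (k - (i+1)) * u ^ (i+1) / (Nat.factorial (i+1) : ℝ)|
        ≤ ∑ i ∈ range k, |(-1 : ℝ) ^ (i+1) * genBinom ((k : ℝ) + a) (k - (i+1)) * u ^ (i+1) / (Nat.factorial (i+1) : ℝ)| :=
          Finset.abs_sum_le_sum_abs _ _
      _ ≤ ∑ i ∈ range k, 2 ^ k * (u / (Nat.factorial (i+1) : ℝ)) := by
          apply Finset.sum_le_sum
          intro i hi
          rw [abs_div, abs_mul, abs_mul, abs_pow, abs_pow, abs_neg, abs_one, one_pow, one_mul,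
            abs_of_pos (genBinom_pos ha1 (Nat.sub_le k (i+1))), abs_of_nonneg h0, Nat.abs_cast,
            mul_div_assoc]
          have hui : u ^ (i+1) ≤ u := by
            calc u ^ (i+1) ≤ u ^ 1 := pow_le_pow_of_le_one h0 hu1 (by omega)
              _ = u := pow_one u
          calc genBinom ((k : ℝ) + a) (k - (i+1)) * (u ^ (i+1) / (Nat.factorial (i+1) : ℝ))
              ≤ 2 ^ k * (u ^ (i+1) / (Nat.factorial (i+1) : ℝ)) :=
                mul_le_mul_of_nonneg_right (genBinom_le_two_pow ha1 ha2 (Nat.sub_le k (i+1))) (by positivity)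
            _ ≤ 2 ^ k * (u / (Nat.factorial (i+1) : ℝ)) := by
                apply mul_le_mul_of_nonneg_left _ (by positivity)
                gcongr
      _ = 2 ^ k * u * ∑ i ∈ range k, ((Nat.factorial (i+1) : ℝ))⁻¹ := by
          rw [Finset.mul_sum]; apply Finset.sum_congr rfl; intro i _; ring
      _ ≤ 2 ^ k * (2 * u) := by
          have hsum : ∑ i ∈ range k, ((Nat.factorial (i+1) : ℝ))⁻¹ ≤ 2 := by
            have h2 : ∑ i ∈ range k, ((Nat.factorial (i+1) : ℝ))⁻¹
                = ∑ i ∈ range k, (1:ℝ) ^ (i+1) / (Nat.factorial (i+1) : ℝ) := by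
              apply Finset.sum_congr rfl; intro i _; rw [one_pow, one_div]
            have h3 : (1:ℝ) + ∑ i ∈ range k, (1:ℝ) ^ (i+1) / (Nat.factorial (i+1) : ℝ)
                = ∑ i ∈ range (k+1), (1:ℝ) ^ i / (Nat.factorial i : ℝ) := by
              rw [Finset.sum_range_succ']; simp [add_comm]
            have h5 : ∑ i ∈ range (k+1), (1:ℝ) ^ i / (Nat.factorial i : ℝ) ≤ Real.exp 1 :=
              Real.sum_le_exp_of_nonneg zero_le_one _
            have h6 : Real.exp 1 ≤ 3 := by
              have := Real.exp_one_lt_d9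
              linarith
            rw [h2]
            linarith
          calc 2 ^ k * u * ∑ i ∈ range k, ((Nat.factorial (i+1) : ℝ))⁻¹
              ≤ 2 ^ k * u * 2 := by
                apply mul_le_mul_of_nonneg_left hsum (by positivity)
            _ = 2 ^ k * (2 * u) := by ring
  have hb := genBinom_ge_pow ha ha2 k
  have hkey : (2:ℝ) ^ k * (2 * u) ≤ (2:ℝ)⁻¹ ^ k / 2 := by
    have h7 : (2:ℝ) ^ k * (2 * u) ≤ 2 ^ k * (2 * ((4:ℝ)⁻¹ ^ k / 12)) := by
      apply mul_le_mul_of_nonneg_left _ (by positivity)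
      linarith
    have hmp : (2:ℝ) ^ k * (4:ℝ)⁻¹ ^ k = (2:ℝ)⁻¹ ^ k := by
      rw [← mul_pow]; norm_num
    have h8 : (2:ℝ) ^ k * (2 * ((4:ℝ)⁻¹ ^ k / 12)) = (2:ℝ)⁻¹ ^ k / 6 :=
      calc (2:ℝ) ^ k * (2 * ((4:ℝ)⁻¹ ^ k / 12)) = ((2:ℝ) ^ k * (4:ℝ)⁻¹ ^ k) / 6 := by ring
        _ = (2:ℝ)⁻¹ ^ k / 6 := by rw [hmp]
    have hpos : (0:ℝ) ≤ (2:ℝ)⁻¹ ^ k := by positivity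
    linarith
  have habs := abs_le.mp htail
  linarith

lemma an_mem (n : ℕ) : -1 < -(1 / (2 * (n : ℝ) + 2)) ∧ -(1/2) ≤ -(1 / (2 * (n : ℝ) + 2)) ∧
    -(1 / (2 * (n : ℝ) + 2)) ≤ 0 := by
  have hn0 : (0:ℝ) ≤ (n:ℝ) := Nat.cast_nonneg n
  have h2 : (2:ℝ) ≤ 2 * (n:ℝ) + 2 := by linarith
  have hpos : (0:ℝ) < 2 * (n:ℝ) + 2 := by linarith
  refine ⟨?_, ?_, ?_⟩
  · have : 1 / (2 * (n : ℝ) + 2) ≤ 1/2 := by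
      apply div_le_div_of_nonneg_left (by norm_num) (by norm_num) h2
    linarith
  · have : 1 / (2 * (n : ℝ) + 2) ≤ 1/2 := by
      apply div_le_div_of_nonneg_left (by norm_num) (by norm_num) h2
    linarith
  · have : 0 ≤ 1 / (2 * (n : ℝ) + 2) := by positivity
    linarith

lemma vkC_ofReal (n k : ℕ) (t : ℝ) : vkC n k (t : ℂ) = ((vk n k t : ℝ) : ℂ) := by
  have h1 : ((t:ℂ)) ^ (2*n+2) / ((n:ℂ)+1) = (((t ^ (2*n+2) / ((n:ℝ)+1)) : ℝ) : ℂ) := by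
    push_cast; ring
  have h2 : -(((t:ℂ)) ^ (2*n+2)) / (2*(n:ℂ)+2) = (((-(t ^ (2*n+2)) / (2*(n:ℝ)+2)) : ℝ) : ℂ) := by
    push_cast; ring
  rw [vkC, h1, h2, laguerreC_ofReal, ← Complex.ofReal_exp, ← Complex.ofReal_mul, vk]

lemma differentiable_laguerreC (a : ℝ) (k : ℕ) : Differentiable ℂ (laguerreC a k) := by
  have : laguerreC a k = fun s => ∑ i ∈ Finset.range (k + 1),
      (-1 : ℂ) ^ i * (genBinom ((k : ℝ) + a) (k - i) : ℂ) * s ^ i / (Nat.factorial i : ℂ) := rfl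
  rw [this]
  apply Differentiable.fun_sum
  intro i _
  exact ((differentiable_pow i).const_mul _).div_const _

lemma differentiable_vkC (n k : ℕ) : Differentiable ℂ (vkC n k) := by
  apply Differentiable.mul
  · exact Complex.differentiable_exp.comp ((differentiable_pow _).neg.div_const _)
  · exact (differentiable_laguerreC _ _).comp ((differentiable_pow _).div_const _)

lemma abs_arg1 (n : ℕ) (z : ℂ) :
    ‖-(z ^ (2 * n + 2)) / (2 * (n : ℂ) + 2)‖ = ‖z‖ ^ (2*n+2) / (2*(n:ℝ)+2) := by
  have h : (2 * (n : ℂ) + 2) = (((2*(n:ℝ)+2) : ℝ) : ℂ) := by push_cast; ring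
  rw [norm_div, norm_neg, norm_pow, h, Complex.norm_real, Real.norm_eq_abs,
    abs_of_pos (by positivity : (0:ℝ) < 2*(n:ℝ)+2)]

lemma abs_arg2 (n : ℕ) (z : ℂ) :
    ‖z ^ (2 * n + 2) / ((n : ℂ) + 1)‖ = ‖z‖ ^ (2*n+2) / ((n:ℝ)+1) := by
  have h : ((n : ℂ) + 1) = ((((n:ℝ)+1) : ℝ) : ℂ) := by push_cast; ring
  rw [norm_div, norm_pow, h, Complex.norm_real, Real.norm_eq_abs,
    abs_of_pos (by positivity : (0:ℝ) < (n:ℝ)+1)]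

lemma vkC_abs_le (n k : ℕ) (z : ℂ) :
    ‖vkC n k z‖ ≤ 2 ^ k * Real.exp (2 * ‖z‖ ^ (2*n+2)) := by
  obtain ⟨ha1, ha2, ha3⟩ := an_mem n
  rw [vkC, norm_mul]
  have hE : ‖Complex.exp (-(z ^ (2 * n + 2)) / (2 * (n : ℂ) + 2))‖
      ≤ Real.exp (‖z‖ ^ (2*n+2) / (2*(n:ℝ)+2)) := by
    rw [Complex.norm_exp]
    apply Real.exp_le_exp.mpr
    calc (-(z ^ (2 * n + 2)) / (2 * (n : ℂ) + 2)).re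
        ≤ ‖-(z ^ (2 * n + 2)) / (2 * (n : ℂ) + 2)‖ := Complex.re_le_norm _
      _ = ‖z‖ ^ (2*n+2) / (2*(n:ℝ)+2) := abs_arg1 n z
  have hL : ‖laguerreC (-(1 / (2 * (n : ℝ) + 2))) k (z ^ (2 * n + 2) / ((n : ℂ) + 1))‖
      ≤ 2 ^ k * Real.exp (‖z‖ ^ (2*n+2) / ((n:ℝ)+1)) := by
    have := laguerreC_abs_le ha1 ha3 k (z ^ (2 * n + 2) / ((n : ℂ) + 1))
    rwa [abs_arg2] at this
  calc ‖Complex.exp (-(z ^ (2 * n + 2)) / (2 * (n : ℂ) + 2))‖ *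
        ‖laguerreC (-(1 / (2 * (n : ℝ) + 2))) k (z ^ (2 * n + 2) / ((n : ℂ) + 1))‖
      ≤ Real.exp (‖z‖ ^ (2*n+2) / (2*(n:ℝ)+2)) *
        (2 ^ k * Real.exp (‖z‖ ^ (2*n+2) / ((n:ℝ)+1))) := by
        apply mul_le_mul hE hL (by positivity) (by positivity)
    _ = 2 ^ k * Real.exp (‖z‖ ^ (2*n+2) / (2*(n:ℝ)+2) + ‖z‖ ^ (2*n+2) / ((n:ℝ)+1)) := by
        rw [Real.exp_add]; ring
    _ ≤ 2 ^ k * Real.exp (2 * ‖z‖ ^ (2*n+2)) := by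
        apply mul_le_mul_of_nonneg_left _ (by positivity)
        apply Real.exp_le_exp.mpr
        have hz : (0:ℝ) ≤ ‖z‖ ^ (2*n+2) := by positivity
        have h1 : ‖z‖ ^ (2*n+2) / (2*(n:ℝ)+2) ≤ ‖z‖ ^ (2*n+2) := by
          apply div_le_self hz
          have : (0:ℝ) ≤ (n:ℝ) := Nat.cast_nonneg n
          linarith
        have h2 : ‖z‖ ^ (2*n+2) / ((n:ℝ)+1) ≤ ‖z‖ ^ (2*n+2) := by
          apply div_le_self hz
          have : (0:ℝ) ≤ (n:ℝ) := Nat.cast_nonneg n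
          linarith
        linarith

noncomputable def om (n : ℕ) : ℂ := Complex.exp ((π / (2*(n:ℝ)+2) : ℝ) * Complex.I)

lemma om_abs (n : ℕ) : ‖om n‖ = 1 := Complex.norm_exp_ofReal_mul_I _

lemma om_pow (n : ℕ) : (om n) ^ (2*n+2) = -1 := by
  rw [om, ← Complex.exp_nat_mul]
  have hc : ((2*n+2 : ℕ) : ℂ) = (((2*(n:ℝ)+2) : ℝ) : ℂ) := by push_cast; ring
  have hr : (2*(n:ℝ)+2) * (π / (2*(n:ℝ)+2)) = π := by
    have hne : (2*(n:ℝ)+2) ≠ 0 := by positivity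
    field_simp
  have h : ((2*n+2 : ℕ) : ℂ) * (((π / (2*(n:ℝ)+2)) : ℝ) * Complex.I) = (π:ℝ) * Complex.I := by
    rw [hc, ← mul_assoc, ← Complex.ofReal_mul, hr]
  rw [h, Complex.exp_pi_mul_I]

lemma vkC_ray_lower (n k : ℕ) {t : ℝ} (ht : 0 ≤ t) :
    (2 : ℝ)⁻¹ ^ k * Real.exp (t ^ (2*n+2) / (2*(n:ℝ)+2))
      ≤ ‖vkC n k ((t:ℂ) * om n)‖ := by
  obtain ⟨ha1, ha2, ha3⟩ := an_mem n
  have hzE : ((t:ℂ) * om n) ^ (2*n+2) = -(((t ^ (2*n+2) : ℝ)) : ℂ) := by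
    rw [mul_pow, om_pow]; push_cast; ring
  have hT : (0:ℝ) ≤ t ^ (2*n+2) := by positivity
  rw [vkC, hzE, norm_mul]
  have e1 : -(-(((t ^ (2*n+2) : ℝ)) : ℂ)) / (2*(n:ℂ)+2)
      = (((t ^ (2*n+2) / (2*(n:ℝ)+2)) : ℝ) : ℂ) := by push_cast; ring
  have e2 : -(((t ^ (2*n+2) : ℝ)) : ℂ) / ((n:ℂ)+1)
      = (((-(t ^ (2*n+2)) / ((n:ℝ)+1)) : ℝ) : ℂ) := by push_cast; ring
  rw [e1, e2, laguerreC_ofReal]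
  rw [← Complex.ofReal_exp, Complex.norm_real, Complex.norm_real, Real.norm_eq_abs, Real.norm_eq_abs]
  have hle : -(t ^ (2*n+2)) / ((n:ℝ)+1) ≤ 0 := by
    apply div_nonpos_of_nonpos_of_nonneg (by linarith)
    positivity
  have hlag := laguerre_ge_of_nonpos ha2 ha3 k hle
  rw [abs_of_pos (Real.exp_pos _), abs_of_pos (lt_of_lt_of_le (by positivity) hlag)]
  rw [mul_comm]
  exact mul_le_mul_of_nonneg_left hlag (Real.exp_pos _).le

lemma continuous_laguerre (a : ℝ) (k : ℕ) : Continuous (laguerre a k) := by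
  have : laguerre a k = fun s => ∑ i ∈ Finset.range (k + 1),
      (-1 : ℝ) ^ i * genBinom ((k : ℝ) + a) (k - i) * s ^ i / (Nat.factorial i : ℝ) := rfl
  rw [this]
  apply continuous_finset_sum
  intro i _
  exact ((continuous_const.mul (continuous_pow i))).div_const _

lemma continuous_vk (n k : ℕ) : Continuous (vk n k) := by
  apply Continuous.mul
  · exact Real.continuous_exp.comp ((continuous_pow _).neg.div_const _)
  · exact (continuous_laguerre _ _).comp ((continuous_pow _).div_const _)

lemma pow_even_nonneg (n : ℕ) (s : ℝ) : 0 ≤ s ^ (2*n+2) := by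
  rw [show 2*n+2 = (n+1)*2 by ring, pow_mul]
  positivity

lemma sq_sub_pow_le (n : ℕ) (s : ℝ) : s^2 - s^(2*n+2) ≤ 2*(n:ℝ)+2 := by
  rcases le_or_gt (s^2) 1 with h | h
  · have := pow_even_nonneg n s
    have hn : (0:ℝ) ≤ n := Nat.cast_nonneg n
    linarith
  · have h1 : s^(2*n+2) = (s^2)^(n+1) := by rw [← pow_mul]; ring_nf
    have h2 : s^2 ≤ (s^2)^(n+1) := le_self_pow₀ h.le (Nat.succ_ne_zero n)
    have hn : (0:ℝ) ≤ n := Nat.cast_nonneg n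
    rw [h1] at *
    linarith

lemma vk_sq_bound (n k : ℕ) (s : ℝ) :
    s ^ (2*n) * vk n k s ^ 2 ≤ (64 ^ (k+1) * Real.exp 1) * (s ^ (2*n) * Real.exp (-(2*(n:ℝ)+2)⁻¹ * s^2)) := by
  obtain ⟨ha1, ha2, ha3⟩ := an_mem n
  set u : ℝ := s ^ (2*n+2) / ((n:ℝ)+1) with hu_def
  have hsE := pow_even_nonneg n s
  have hu : 0 ≤ u := by positivity
  have hL := laguerre_abs_le_exp_quarter ha1 ha3 k hu
  have hL2 : laguerre (-(1 / (2 * (n : ℝ) + 2))) k u ^ 2 ≤ (8 ^ (k+1) * Real.exp (u/4))^2 := by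
    rw [← sq_abs]
    apply pow_le_pow_left₀ (abs_nonneg _) hL
  have hexp2 : Real.exp (-(s ^ (2*n+2)) / (2*(n:ℝ)+2)) ^ 2
      = Real.exp (-(s ^ (2*n+2)) / ((n:ℝ)+1)) := by
    rw [sq, ← Real.exp_add]
    congr 1
    field_simp
    ring
  have key : vk n k s ^ 2 ≤ 64 ^ (k+1) * Real.exp (-(s ^ (2*n+2)) / (2*(n:ℝ)+2)) := by
    rw [vk, mul_pow, hexp2]
    calc Real.exp (-(s ^ (2*n+2)) / ((n:ℝ)+1)) * laguerre (-(1 / (2 * (n : ℝ) + 2))) k u ^ 2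
        ≤ Real.exp (-(s ^ (2*n+2)) / ((n:ℝ)+1)) * (8 ^ (k+1) * Real.exp (u/4))^2 :=
          mul_le_mul_of_nonneg_left hL2 (Real.exp_pos _).le
      _ = 64 ^ (k+1) * (Real.exp (-(s ^ (2*n+2)) / ((n:ℝ)+1)) * Real.exp (u/2)) := by
          have h8 : ((8:ℝ)^(k+1))^2 = 64^(k+1) := by
            rw [← pow_mul, mul_comm (k+1) 2, pow_mul]; norm_num
          have hq : Real.exp (u/4) ^ 2 = Real.exp (u/2) := by
            rw [sq, ← Real.exp_add]; ring_nf
          rw [mul_pow, h8, hq]; ring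
      _ = 64 ^ (k+1) * Real.exp (-(s ^ (2*n+2)) / (2*(n:ℝ)+2)) := by
          have harg : -(s ^ (2*n+2)) / ((n:ℝ)+1) + u/2 = -(s ^ (2*n+2)) / (2*(n:ℝ)+2) := by
            rw [hu_def]
            have hne1 : ((n:ℝ)+1) ≠ 0 := by positivity
            have hne2 : (2*(n:ℝ)+2) ≠ 0 := by positivity
            field_simp
            ring
          rw [← Real.exp_add, harg]
  have hfinal : Real.exp (-(s ^ (2*n+2)) / (2*(n:ℝ)+2))
      ≤ Real.exp 1 * Real.exp (-(2*(n:ℝ)+2)⁻¹ * s^2) := by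
    rw [← Real.exp_add]
    apply Real.exp_le_exp.mpr
    have h := sq_sub_pow_le n s
    have hpos : (0:ℝ) < 2*(n:ℝ)+2 := by positivity
    have hinv : (0:ℝ) < (2*(n:ℝ)+2)⁻¹ := by positivity
    have hmul : (2*(n:ℝ)+2)⁻¹ * (s^2 - s^(2*n+2)) ≤ (2*(n:ℝ)+2)⁻¹ * (2*(n:ℝ)+2) :=
      mul_le_mul_of_nonneg_left h hinv.le
    rw [inv_mul_cancel₀ (ne_of_gt hpos)] at hmul
    have e : -(s^(2*n+2)) / (2*(n:ℝ)+2)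
        = (2*(n:ℝ)+2)⁻¹ * (s^2 - s^(2*n+2)) - (2*(n:ℝ)+2)⁻¹ * s^2 := by ring
    rw [e]
    linarith [hmul]
  have hs2n : (0:ℝ) ≤ s ^ (2*n) := by rw [pow_mul]; positivity
  calc s ^ (2*n) * vk n k s ^ 2
      ≤ s ^ (2*n) * (64 ^ (k+1) * Real.exp (-(s ^ (2*n+2)) / (2*(n:ℝ)+2))) :=
        mul_le_mul_of_nonneg_left key hs2n
    _ ≤ s ^ (2*n) * (64 ^ (k+1) * (Real.exp 1 * Real.exp (-(2*(n:ℝ)+2)⁻¹ * s^2))) := by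
        apply mul_le_mul_of_nonneg_left _ hs2n
        exact mul_le_mul_of_nonneg_left hfinal (by positivity)
    _ = (64 ^ (k+1) * Real.exp 1) * (s ^ (2*n) * Real.exp (-(2*(n:ℝ)+2)⁻¹ * s^2)) := by ring

lemma vk_sq_nonneg (n k : ℕ) (s : ℝ) : 0 ≤ s ^ (2*n) * vk n k s ^ 2 := by
  have hs2n : (0:ℝ) ≤ s ^ (2*n) := by rw [pow_mul]; positivity
  positivity

lemma integrable_vk_sq (n k : ℕ) :
    Integrable (fun s : ℝ => s ^ (2*n) * vk n k s ^ 2) := by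
  have hb : (0:ℝ) < (2*(n:ℝ)+2)⁻¹ := by positivity
  have hg0 : Integrable (fun s : ℝ => s ^ ((2*n : ℕ) : ℝ) * Real.exp (-(2*(n:ℝ)+2)⁻¹ * s^2)) :=
    integrable_rpow_mul_exp_neg_mul_sq hb (by
      have : (0:ℝ) ≤ ((2*n : ℕ) : ℝ) := Nat.cast_nonneg _
      linarith)
  have hg : Integrable (fun s : ℝ => s ^ (2*n : ℕ) * Real.exp (-(2*(n:ℝ)+2)⁻¹ * s^2)) := by
    have : (fun s : ℝ => s ^ (2*n : ℕ) * Real.exp (-(2*(n:ℝ)+2)⁻¹ * s^2))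
        = fun s : ℝ => s ^ ((2*n : ℕ) : ℝ) * Real.exp (-(2*(n:ℝ)+2)⁻¹ * s^2) := by
      funext s
      rw [Real.rpow_natCast]
    rw [this]
    exact hg0
  apply Integrable.mono' (hg.const_mul (64 ^ (k+1) * Real.exp 1))
  · exact (((continuous_pow (2*n)).mul ((continuous_vk n k).pow 2))).aestronglyMeasurable
  · filter_upwards with s
    rw [Real.norm_eq_abs, abs_of_nonneg (vk_sq_nonneg n k s)]
    exact vk_sq_bound n k s

lemma integral_vk_sq_lower (n k : ℕ) :
    ((12:ℝ) ^ (2*n+2) * (2*(n:ℝ)+1))⁻¹ * ((4:ℝ)⁻¹ ^ (2*n+2)) ^ k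
      ≤ ∫ s : ℝ, s ^ (2*n) * vk n k s ^ 2 := by
  obtain ⟨ha1, ha2, ha3⟩ := an_mem n
  set r : ℝ := (4:ℝ)⁻¹ ^ k / 12 with hr_def
  have hr0 : (0:ℝ) < r := by positivity
  have hr1 : r ≤ 1 := by
    have : (4:ℝ)⁻¹ ^ k ≤ 1 := pow_le_one₀ (by norm_num) (by norm_num)
    rw [hr_def]
    linarith
  set c : ℝ := 3⁻¹ * ((2:ℝ)⁻¹ ^ k / 2)^2 with hc_def
  have hc0 : 0 < c := by positivity
  have hpt : ∀ s ∈ Set.Ioc (0:ℝ) r, c * s ^ (2*n) ≤ s ^ (2*n) * vk n k s ^ 2 := by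
    intro s hs
    obtain ⟨hs0, hsr⟩ := hs
    have hs1 : s ≤ 1 := le_trans hsr hr1
    set u : ℝ := s ^ (2*n+2) / ((n:ℝ)+1) with hu_def
    have hsE : 0 ≤ s ^ (2*n+2) := pow_even_nonneg n s
    have hu0 : 0 ≤ u := by positivity
    have hsEs : s ^ (2*n+2) ≤ s := pow_le_of_le_one hs0.le hs1 (by omega)
    have hur : u ≤ (4:ℝ)⁻¹ ^ k / 12 := by
      have h1 : u ≤ s ^ (2*n+2) := by
        rw [hu_def]
        apply div_le_self hsE
        have : (0:ℝ) ≤ (n:ℝ) := Nat.cast_nonneg n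
        linarith
      calc u ≤ s ^ (2*n+2) := h1
        _ ≤ s := hsEs
        _ ≤ r := hsr
    have hu1 : u ≤ 1 := by
      have : (4:ℝ)⁻¹ ^ k ≤ 1 := pow_le_one₀ (by norm_num) (by norm_num)
      linarith
    have hlag := laguerre_ge_near_zero ha2 ha3 k hu0 hur
    have hexp : 3⁻¹ ≤ Real.exp (-(s ^ (2*n+2)) / (2*(n:ℝ)+2)) ^ 2 := by
      have hpos : (0:ℝ) < 2*(n:ℝ)+2 := by positivity
      have e1 : Real.exp (-(s ^ (2*n+2)) / (2*(n:ℝ)+2)) ^ 2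
          = Real.exp (-(s ^ (2*n+2)) / ((n:ℝ)+1)) := by
        rw [sq, ← Real.exp_add]
        congr 1
        field_simp
        ring
      rw [e1]
      have h2 : -(1:ℝ) ≤ -(s ^ (2*n+2)) / ((n:ℝ)+1) := by
        rw [neg_div, neg_le_neg_iff]
        calc s ^ (2*n+2) / ((n:ℝ)+1) = u := rfl
          _ ≤ 1 := hu1
      calc (3:ℝ)⁻¹ ≤ Real.exp (-1) := by
            rw [Real.exp_neg]
            apply inv_anti₀ (Real.exp_pos _)
            have := Real.exp_one_lt_d9
            linarith
        _ ≤ Real.exp (-(s ^ (2*n+2)) / ((n:ℝ)+1)) := Real.exp_le_exp.mpr h2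
    have hlag2 : ((2:ℝ)⁻¹ ^ k / 2)^2 ≤ laguerre (-(1 / (2 * (n : ℝ) + 2))) k u ^ 2 := by
      apply pow_le_pow_left₀ (by positivity) hlag
    have hvk : c ≤ vk n k s ^ 2 := by
      rw [vk, mul_pow]
      calc c = 3⁻¹ * ((2:ℝ)⁻¹ ^ k / 2)^2 := hc_def
        _ ≤ Real.exp (-(s ^ (2*n+2)) / (2*(n:ℝ)+2)) ^ 2 * (laguerre (-(1 / (2 * (n : ℝ) + 2))) k u ^ 2) := by
            apply mul_le_mul hexp hlag2 (by positivity) (by positivity)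
    have hs2n : (0:ℝ) ≤ s ^ (2*n) := by rw [pow_mul]; positivity
    calc c * s ^ (2*n) = s ^ (2*n) * c := by ring
      _ ≤ s ^ (2*n) * vk n k s ^ 2 := mul_le_mul_of_nonneg_left hvk hs2n
  have hint := integrable_vk_sq n k
  have h3 : ∫ s in Set.Ioc (0:ℝ) r, s ^ (2*n) * vk n k s ^ 2
      ≤ ∫ s : ℝ, s ^ (2*n) * vk n k s ^ 2 :=
    setIntegral_le_integral hint (Filter.Eventually.of_forall (vk_sq_nonneg n k))
  have h2 : ∫ s in Set.Ioc (0:ℝ) r, c * s ^ (2*n)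
      ≤ ∫ s in Set.Ioc (0:ℝ) r, s ^ (2*n) * vk n k s ^ 2 := by
    apply setIntegral_mono_on
    · exact (((continuous_const.mul (continuous_pow (2*n)))).integrableOn_Ioc)
    · exact hint.integrableOn
    · exact measurableSet_Ioc
    · exact hpt
  have h4 : ∫ s in Set.Ioc (0:ℝ) r, c * s ^ (2*n) = c * (r ^ (2*n+1) / ((2*n : ℕ) + 1 : ℝ)) := by
    rw [← intervalIntegral.integral_of_le hr0.le, intervalIntegral.integral_const_mul,
      integral_pow]
    norm_num
  have h5 : ((12:ℝ) ^ (2*n+2) * (2*(n:ℝ)+1))⁻¹ * ((4:ℝ)⁻¹ ^ (2*n+2)) ^ k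
      = c * (r ^ (2*n+1) / ((2*n : ℕ) + 1 : ℝ)) := by
    have hcast : ((2*n : ℕ) + 1 : ℝ) = 2*(n:ℝ)+1 := by push_cast; ring
    have e1 : ((2:ℝ)⁻¹ ^ k)^2 = (4:ℝ)⁻¹ ^ k := by
      rw [← pow_mul, mul_comm k 2, pow_mul]
      norm_num
    have ec : c = (4:ℝ)⁻¹ ^ k * 12⁻¹ := by
      rw [hc_def, div_pow, e1]; norm_num; ring
    have er : r = (4:ℝ)⁻¹ ^ k * 12⁻¹ := by rw [hr_def]; ring
    have epow : (((4:ℝ)⁻¹ ^ (2*n+2)) ^ k) = (((4:ℝ)⁻¹ ^ k) ^ (2*n+2)) := by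
      rw [← pow_mul, ← pow_mul, mul_comm]
    rw [hcast, ec, er, epow, mul_inv, ← inv_pow]
    ring
  linarith

noncomputable def C0 (n : ℕ) : ℝ := max ((12:ℝ) ^ (2*n+2) * (2*(n:ℝ)+1)) ((4:ℝ) ^ (2*n+2))

lemma C0_pos (n : ℕ) : 0 < C0 n := lt_max_of_lt_right (by positivity)

lemma C0_ge_one (n : ℕ) : 1 ≤ C0 n :=
  le_max_of_le_right (one_le_pow₀ (by norm_num))

lemma sqrt_integral_pos (n k : ℕ) :
    0 < Real.sqrt (∫ s : ℝ, s ^ (2*n) * vk n k s ^ 2) := by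
  apply Real.sqrt_pos.mpr
  calc (0:ℝ) < ((12:ℝ) ^ (2*n+2) * (2*(n:ℝ)+1))⁻¹ * ((4:ℝ)⁻¹ ^ (2*n+2)) ^ k := by positivity
    _ ≤ _ := integral_vk_sq_lower n k

lemma inv_sqrt_integral_le (n k : ℕ) :
    (Real.sqrt (∫ s : ℝ, s ^ (2*n) * vk n k s ^ 2))⁻¹ ≤ (C0 n) ^ (k+1) := by
  set β : ℝ := ((12:ℝ) ^ (2*n+2) * (2*(n:ℝ)+1))⁻¹ with hβ
  set γ : ℝ := (4:ℝ)⁻¹ ^ (2*n+2) with hγ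
  have hβ0 : 0 < β := by positivity
  have hγ0 : 0 < γ := by positivity
  have hβ1 : β ≤ 1 := by
    rw [hβ]
    apply inv_le_one_of_one_le₀
    have h1 : (1:ℝ) ≤ (12:ℝ) ^ (2*n+2) := one_le_pow₀ (by norm_num)
    have h2 : (1:ℝ) ≤ 2*(n:ℝ)+1 := by
      have : (0:ℝ) ≤ (n:ℝ) := Nat.cast_nonneg n
      linarith
    nlinarith
  have hγ1 : γ ≤ 1 := pow_le_one₀ (by norm_num) (by norm_num)
  have hx0 : 0 < β * γ ^ k := mul_pos hβ0 (pow_pos hγ0 k)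
  have hx1 : β * γ ^ k ≤ 1 :=
    mul_le_one₀ hβ1 (pow_nonneg hγ0.le k) (pow_le_one₀ hγ0.le hγ1)
  have hI := integral_vk_sq_lower n k
  have hs1 : β * γ ^ k ≤ Real.sqrt (∫ s : ℝ, s ^ (2*n) * vk n k s ^ 2) := by
    calc β * γ ^ k ≤ Real.sqrt (β * γ ^ k) := by
          rw [Real.le_sqrt hx0.le hx0.le]
          nlinarith [mul_nonneg hx0.le (sub_nonneg.mpr hx1), hx0.le, hx1]
      _ ≤ Real.sqrt (∫ s : ℝ, s ^ (2*n) * vk n k s ^ 2) := Real.sqrt_le_sqrt hI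
  have hs0 := sqrt_integral_pos n k
  calc (Real.sqrt (∫ s : ℝ, s ^ (2*n) * vk n k s ^ 2))⁻¹ ≤ (β * γ ^ k)⁻¹ := by
        apply inv_anti₀ hx0 hs1
    _ = β⁻¹ * (γ⁻¹) ^ k := by rw [mul_inv, inv_pow]
    _ ≤ C0 n * (C0 n) ^ k := by
        apply mul_le_mul
        · rw [hβ, inv_inv]; exact le_max_left _ _
        · apply pow_le_pow_left₀ (by positivity)
          rw [hγ, inv_pow, inv_inv]; exact le_max_right _ _
        · positivity
        · exact (C0_pos n).le
    _ = (C0 n) ^ (k+1) := by rw [pow_succ]; ring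

lemma nvkC_abs (n k : ℕ) (z : ℂ) :
    ‖nvkC n k z‖
      = ‖vkC n k z‖ * (Real.sqrt (∫ s : ℝ, s ^ (2*n) * vk n k s ^ 2))⁻¹ := by
  rw [nvkC, norm_div, Complex.norm_real, Real.norm_eq_abs, abs_of_pos (sqrt_integral_pos n k), div_eq_mul_inv]

lemma nvkC_abs_le (n k : ℕ) (z : ℂ) :
    ‖nvkC n k z‖
      ≤ (2 * C0 n) ^ (k+1) * Real.exp (2 * ‖z‖ ^ (2*n+2)) := by
  rw [nvkC_abs]
  calc ‖vkC n k z‖ * (Real.sqrt (∫ s : ℝ, s ^ (2*n) * vk n k s ^ 2))⁻¹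
      ≤ (2 ^ k * Real.exp (2 * ‖z‖ ^ (2*n+2))) * (C0 n) ^ (k+1) := by
        apply mul_le_mul (vkC_abs_le n k z) (inv_sqrt_integral_le n k)
          (inv_nonneg.mpr (sqrt_integral_pos n k).le)
          (mul_nonneg (by positivity) (Real.exp_pos _).le)
    _ = (2 ^ k * (C0 n) ^ (k+1)) * Real.exp (2 * ‖z‖ ^ (2*n+2)) := by ring
    _ ≤ (2 * C0 n) ^ (k+1) * Real.exp (2 * ‖z‖ ^ (2*n+2)) := by
        apply mul_le_mul_of_nonneg_right _ (Real.exp_pos _).le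
        rw [mul_pow]
        apply mul_le_mul_of_nonneg_right (pow_le_pow_right₀ (by norm_num) (Nat.le_succ k))
          (pow_nonneg (C0_pos n).le _)

lemma nvkC_ray_lower (n k : ℕ) {t : ℝ} (ht : 0 ≤ t) :
    ((2 : ℝ)⁻¹ ^ k * (Real.sqrt (∫ s : ℝ, s ^ (2*n) * vk n k s ^ 2))⁻¹)
        * Real.exp (t ^ (2*n+2) / (2*(n:ℝ)+2))
      ≤ ‖nvkC n k ((t:ℂ) * om n)‖ := by
  rw [nvkC_abs]
  have h := vkC_ray_lower n k ht
  have hinv : 0 < (Real.sqrt (∫ s : ℝ, s ^ (2*n) * vk n k s ^ 2))⁻¹ :=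
    inv_pos.mpr (sqrt_integral_pos n k)
  calc ((2 : ℝ)⁻¹ ^ k * (Real.sqrt (∫ s : ℝ, s ^ (2*n) * vk n k s ^ 2))⁻¹)
        * Real.exp (t ^ (2*n+2) / (2*(n:ℝ)+2))
      = ((2 : ℝ)⁻¹ ^ k * Real.exp (t ^ (2*n+2) / (2*(n:ℝ)+2)))
        * (Real.sqrt (∫ s : ℝ, s ^ (2*n) * vk n k s ^ 2))⁻¹ := by ring
    _ ≤ ‖vkC n k ((t:ℂ) * om n)‖
        * (Real.sqrt (∫ s : ℝ, s ^ (2*n) * vk n k s ^ 2))⁻¹ :=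
        mul_le_mul_of_nonneg_right h hinv.le

lemma rpow_split (n : ℕ) {r α : ℝ} (hr : 0 < r) :
    r ^ α = r ^ (2*n+2 : ℕ) * r ^ (α - (2*(n:ℝ)+2)) := by
  have h1 : r ^ ((2*(n:ℝ)+2) + (α - (2*(n:ℝ)+2))) = r ^ (2*(n:ℝ)+2) * r ^ (α - (2*(n:ℝ)+2)) :=
    Real.rpow_add hr _ _
  have h2 : (2*(n:ℝ)+2) + (α - (2*(n:ℝ)+2)) = α := by ring
  have h3 : r ^ (2*(n:ℝ)+2) = r ^ (2*n+2 : ℕ) := by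
    rw [show (2*(n:ℝ)+2) = ((2*n+2 : ℕ) : ℝ) by push_cast; ring, Real.rpow_natCast]
  rw [h2, h3] at h1
  exact h1

lemma rpow_base_ge {b e r : ℝ} (hb : 1 ≤ b) (he : 0 < e) (hr : b ^ e⁻¹ ≤ r) : b ≤ r ^ e := by
  have hb0 : (0:ℝ) ≤ b := by linarith
  calc b = (b ^ e⁻¹) ^ e := by
        rw [← Real.rpow_mul hb0, inv_mul_cancel₀ (ne_of_gt he), Real.rpow_one]
    _ ≤ r ^ e := Real.rpow_le_rpow (Real.rpow_nonneg hb0 _) hr he.le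

theorem order_eq (n k : ℕ) :
    sInf {α : ℝ | 0 < α ∧ ∃ R : ℝ, ∀ z : ℂ, R ≤ ‖z‖ →
        ‖nvkC n k z‖ ≤ Real.exp (‖z‖ ^ α)} = 2 * (n : ℝ) + 2 := by
  set Sq : ℝ := Real.sqrt (∫ s : ℝ, s ^ (2*n) * vk n k s ^ 2) with hSq
  have hSq0 : 0 < Sq := sqrt_integral_pos n k
  set M : ℝ := 2 ^ k * Sq⁻¹ with hM
  have hM0 : 0 < M := by positivity
  set c : ℝ := (2:ℝ)⁻¹ ^ k * Sq⁻¹ with hc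
  have hc0 : 0 < c := by positivity
  set S : Set ℝ := {α : ℝ | 0 < α ∧ ∃ R : ℝ, ∀ z : ℂ, R ≤ ‖z‖ →
      ‖nvkC n k z‖ ≤ Real.exp (‖z‖ ^ α)} with hS
  have hn0 : (0:ℝ) ≤ (n:ℝ) := Nat.cast_nonneg n
  have up : ∀ α : ℝ, 2*(n:ℝ)+2 < α → α ∈ S := by
    intro α hα
    refine ⟨by linarith, max (max 1 (Real.log M)) ((3:ℝ) ^ (α - (2*(n:ℝ)+2))⁻¹), ?_⟩
    intro z hz
    set r := ‖z‖ with hr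
    have hr1 : (1:ℝ) ≤ r := le_trans (le_trans (le_max_left _ _) (le_max_left _ _)) hz
    have hr0 : (0:ℝ) < r := by linarith
    have h3 : (3:ℝ) ≤ r ^ (α - (2*(n:ℝ)+2)) :=
      rpow_base_ge (by norm_num) (by linarith) (le_trans (le_max_right _ _) hz)
    have hlog : Real.log M ≤ r ^ (2*n+2 : ℕ) := by
      calc Real.log M ≤ r := le_trans (le_trans (le_max_right _ _) (le_max_left _ _)) hz
        _ ≤ r ^ (2*n+2 : ℕ) := le_self_pow₀ hr1 (by omega)
    have hEnn : (0:ℝ) ≤ r ^ (2*n+2 : ℕ) := by positivity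
    have hkey : Real.log M + 2 * r ^ (2*n+2 : ℕ) ≤ r ^ α := by
      rw [rpow_split n hr0]
      nlinarith [mul_le_mul_of_nonneg_left h3 hEnn]
    calc ‖nvkC n k z‖ ≤ M * Real.exp (2 * r ^ (2*n+2 : ℕ)) := by
          rw [nvkC_abs, hM]
          calc ‖vkC n k z‖ * Sq⁻¹
              ≤ (2 ^ k * Real.exp (2 * r ^ (2*n+2))) * Sq⁻¹ :=
                mul_le_mul_of_nonneg_right (vkC_abs_le n k z) (inv_pos.mpr hSq0).le
            _ = 2 ^ k * Sq⁻¹ * Real.exp (2 * r ^ (2*n+2)) := by ring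
      _ = Real.exp (Real.log M + 2 * r ^ (2*n+2 : ℕ)) := by
          rw [Real.exp_add, Real.exp_log hM0]
      _ ≤ Real.exp (r ^ α) := Real.exp_le_exp.mpr hkey
  have down : ∀ α ∈ S, 2*(n:ℝ)+2 ≤ α := by
    intro α hαS
    obtain ⟨hα0, R, hR⟩ := hαS
    by_contra hcon
    push_neg at hcon
    set X : ℝ := max 1 (1 - Real.log c) with hX
    have hX1 : (1:ℝ) ≤ X := le_max_left _ _
    set t : ℝ := max (max R 1)
        (max ((2*(2*(n:ℝ)+2)) ^ ((2*(n:ℝ)+2) - α)⁻¹) (X ^ α⁻¹)) with ht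
    have ht1 : (1:ℝ) ≤ t := le_trans (le_max_right _ _) (le_max_left _ _)
    have ht0 : (0:ℝ) < t := by linarith
    have htR : R ≤ t := le_trans (le_max_left _ _) (le_max_left _ _)
    have habs : ‖(t:ℂ) * om n‖ = t := by
      rw [norm_mul, om_abs, Complex.norm_real, Real.norm_eq_abs, abs_of_pos ht0, mul_one]
    have hub := hR ((t:ℂ) * om n) (by rw [habs]; exact htR)
    rw [habs] at hub
    have hlb := nvkC_ray_lower n k ht0.le
    have hchain : c * Real.exp (t ^ (2*n+2) / (2*(n:ℝ)+2)) ≤ Real.exp (t ^ α) :=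
      le_trans hlb hub
    have hlogin : Real.log c + t ^ (2*n+2) / (2*(n:ℝ)+2) ≤ t ^ α := by
      have := Real.exp_le_exp.mp (by
        rwa [Real.exp_add, Real.exp_log hc0] : Real.exp (Real.log c + t ^ (2*n+2) / (2*(n:ℝ)+2)) ≤ Real.exp (t ^ α))
      exact this
    have hE2 : (2*(2*(n:ℝ)+2)) ≤ t ^ ((2*(n:ℝ)+2) - α) :=
      rpow_base_ge (by linarith) (by linarith)
        (le_trans (le_max_left _ _) (le_max_right _ _))
    have htX : X ≤ t ^ α :=
      rpow_base_ge hX1 hα0 (le_trans (le_max_right _ _) (le_max_right _ _))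
    have hXlog : 1 - Real.log c ≤ t ^ α := le_trans (le_max_right _ _) htX
    have hta0 : (0:ℝ) < t ^ α := Real.rpow_pos_of_pos ht0 α
    have hsplit : (t:ℝ) ^ (2*n+2 : ℕ) = t ^ α * t ^ ((2*(n:ℝ)+2) - α) := by
      have h1 : t ^ (α + ((2*(n:ℝ)+2) - α)) = t ^ α * t ^ ((2*(n:ℝ)+2) - α) :=
        Real.rpow_add ht0 _ _
      have h2 : α + ((2*(n:ℝ)+2) - α) = (2*(n:ℝ)+2) := by ring
      have h3 : t ^ (2*(n:ℝ)+2) = t ^ (2*n+2 : ℕ) := by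
        rw [show (2*(n:ℝ)+2) = ((2*n+2 : ℕ) : ℝ) by push_cast; ring, Real.rpow_natCast]
      rw [h2, h3] at h1
      exact h1
    have hfrac : 2 * t ^ α ≤ t ^ (2*n+2 : ℕ) / (2*(n:ℝ)+2) := by
      rw [hsplit, le_div_iff₀ (by positivity : (0:ℝ) < 2*(n:ℝ)+2)]
      nlinarith [mul_le_mul_of_nonneg_left hE2 hta0.le]
    linarith
  have hne : S.Nonempty := ⟨2*(n:ℝ)+3, up _ (by linarith)⟩
  have hbdd : BddBelow S := ⟨2*(n:ℝ)+2, down⟩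
  apply le_antisymm
  · apply le_of_forall_pos_le_add
    intro ε hε
    exact csInf_le hbdd (up (2*(n:ℝ)+2+ε) (by linarith))
  · exact le_csInf hne down


/-- Each `v_k` extends to an entire function on `ℂ`, of order exactly `2n+2`
(the infimum of all `α > 0` with `|v_k(z)| ≤ e^{|z|^α}` for large `|z|`) and of
finite type, with the uniform bound `|v_k(z)| ≤ C^{k+1} e^{c₁|z|^{2n+2}}`
for constants `c₁, C > 0` independent of `k`. -/
theorem stmt_9 (n : ℕ) (hn : 0 < n) :
    (∀ k : ℕ, Differentiable ℂ (nvkC n k)) ∧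
    (∀ k : ℕ, ∀ t : ℝ, nvkC n k (t : ℂ) = ((nvk n k t : ℝ) : ℂ)) ∧
    (∀ k : ℕ,
      sInf {α : ℝ | 0 < α ∧ ∃ R : ℝ, ∀ z : ℂ, R ≤ ‖z‖ →
          ‖nvkC n k z‖ ≤ Real.exp (‖z‖ ^ α)} =
        2 * (n : ℝ) + 2) ∧
    (∀ k : ℕ, ∃ A τ : ℝ, 0 < A ∧ 0 < τ ∧ ∀ z : ℂ,
      ‖nvkC n k z‖ ≤ A * Real.exp (τ * ‖z‖ ^ (2 * n + 2))) ∧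
    (∃ c₁ C : ℝ, 0 < c₁ ∧ 0 < C ∧ ∀ k : ℕ, ∀ z : ℂ,
      ‖nvkC n k z‖ ≤ C ^ (k + 1) * Real.exp (c₁ * ‖z‖ ^ (2 * n + 2))) := by
  refine ⟨?_, ?_, ?_, ?_, ?_⟩
  · intro k
    have : nvkC n k = fun z =>
        vkC n k z / ((Real.sqrt (∫ s : ℝ, s ^ (2 * n) * (vk n k s) ^ 2) : ℝ) : ℂ) := rfl
    rw [this]
    exact (differentiable_vkC n k).div_const _
  · intro k t
    rw [nvkC, nvk, vkC_ofReal, ← Complex.ofReal_div]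
  · intro k
    exact order_eq n k
  · intro k
    exact ⟨(2 * C0 n) ^ (k+1), 2, pow_pos (mul_pos two_pos (C0_pos n)) _, by norm_num,
      fun z => nvkC_abs_le n k z⟩
  · exact ⟨2, 2 * C0 n, by norm_num, mul_pos two_pos (C0_pos n),
      fun k z => nvkC_abs_le n k z⟩
end
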